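/- arXiv:0910.1064 — 4 statements merged into one kernel-verified Lean document; each statement's English description precedes it below -/
import Mathlib

section
/- For all positive integers n and ℓ with ℓ ≤ n/2, the maximum number of edges of an n-vertex graph containing no ℓ pairwise vertex-disjoint edges (i.e., no matching of size ℓ) equals max{ (ℓ−1)(n−ℓ+1) + C(ℓ−1,2), C(2ℓ−1,2) }, where C(a,2) denotes the binomial coefficient a choose 2. -/
/-- `G` contains `ℓ` pairwise vertex-disjoint edges, i.e. a matching of size `ℓ`:
an indexed family of edges such that all `2ℓ` endpoints are distinct. -/
def HasMatching {V : Type*} (G : SimpleGraph V) (ℓ : ℕ) : Prop :=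
  ∃ e : Fin ℓ → V × V,
    (∀ i, G.Adj (e i).1 (e i).2) ∧
    Function.Injective (fun p : Fin ℓ × Bool => if p.2 then (e p.1).1 else (e p.1).2)

open Finset SimpleGraph
open scoped Classical

namespace EG


lemma card_val_lt (n c : ℕ) (h : c ≤ n) :
    (Finset.univ.filter (fun u : Fin n => u.val < c)).card = c := by
  rw [← Finset.card_range c]
  apply Finset.card_bij (fun (u : Fin n) _ => u.val)
  · intro a ha; simp at ha ⊢; exact ha
  · intro a ha b hb hab; exact Fin.ext hab
  · intro b hb
    simp at hb
    exact ⟨⟨b, lt_of_lt_of_le hb h⟩, by simp [hb], rfl⟩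

/-- clique on the first `t` vertices of `Fin n` -/
def cliqueG (n t : ℕ) : SimpleGraph (Fin n) where
  Adj x y := x ≠ y ∧ x.val < t ∧ y.val < t
  symm := by constructor; intro x y ⟨h1, h2, h3⟩; exact ⟨h1.symm, h3, h2⟩
  loopless := by constructor; intro x ⟨h1, _⟩; exact h1 rfl

lemma cliqueG_no_matching (n t ℓ : ℕ) (ht : t < 2 * ℓ) :
    ¬ HasMatching (cliqueG n t) ℓ := by
  rintro ⟨e, hadj, hinj⟩
  -- every endpoint has val < t
  have hval : ∀ p : Fin ℓ × Bool,
      ((fun p : Fin ℓ × Bool => if p.2 then (e p.1).1 else (e p.1).2) p).val < t := by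
    rintro ⟨i, b⟩
    have := hadj i
    rcases this with ⟨-, h1, h2⟩
    cases b <;> simpa using (by first | exact h2 | exact h1)
  -- injection (Fin ℓ × Bool) → Fin t
  let F : Fin ℓ × Bool → Fin t := fun p =>
    ⟨_, hval p⟩
  have hFinj : Function.Injective F := by
    intro p q hpq
    apply hinj
    have h2 := congrArg Fin.val hpq
    exact Fin.ext h2
  have := Fintype.card_le_of_injective F hFinj
  simp [Fintype.card_prod] at this
  omega

lemma cliqueG_degree (n t : ℕ) (ht : t ≤ n) (v : Fin n) :
    (cliqueG n t).degree v = if v.val < t then t - 1 else 0 := by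
  rw [← card_neighborFinset_eq_degree]
  by_cases hv : v.val < t
  · simp only [hv, if_true]
    have : (cliqueG n t).neighborFinset v =
        (Finset.univ.filter (fun u : Fin n => u.val < t)).erase v := by
      ext u
      simp only [SimpleGraph.mem_neighborFinset, Finset.mem_erase, Finset.mem_filter,
        Finset.mem_univ, true_and]
      constructor
      · rintro ⟨h1, h2, h3⟩; exact ⟨fun h => h1 (h ▸ rfl), h3⟩
      · rintro ⟨h1, h2⟩; exact ⟨fun h => h1 (by rw [h]), hv, h2⟩
    rw [this, Finset.card_erase_of_mem (by simp [hv]), card_val_lt n t ht]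
  · simp only [hv, if_false]
    rw [Finset.card_eq_zero]
    ext u
    simp [cliqueG, neighborFinset, neighborSet]
    intro h
    obtain ⟨⟨w, ⟨-, h1, -⟩⟩, -, -⟩ := Finset.mem_map.mp h; exact hv h1

lemma cliqueG_card_edges (n t : ℕ) (ht : t ≤ n) :
    (cliqueG n t).edgeFinset.card = t.choose 2 := by
  have hsum := SimpleGraph.sum_degrees_eq_twice_card_edges (cliqueG n t)
  have : ∑ v : Fin n, (cliqueG n t).degree v = t * (t - 1) := by
    calc ∑ v : Fin n, (cliqueG n t).degree v
        = ∑ v : Fin n, (if v.val < t then t - 1 else 0) := by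
          apply Finset.sum_congr rfl; intro v _; exact cliqueG_degree n t ht v
      _ = (Finset.univ.filter (fun v : Fin n => v.val < t)).card * (t-1) := by
          rw [Finset.sum_ite, Finset.sum_const, Finset.sum_const]; simp [mul_comm]
      _ = t * (t - 1) := by rw [card_val_lt n t ht]
    
  rw [this] at hsum
  have h2 : 2 ∣ t * (t - 1) := by
    rcases Nat.even_or_odd t with he | ho
    · exact Dvd.dvd.mul_right he.two_dvd _
    · rcases t with _ | t
      · simp
      · simp only [Nat.succ_sub_one]
        exact Dvd.dvd.mul_left (Nat.Odd.sub_odd ho odd_one).two_dvd _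
  rw [Nat.choose_two_right]
  omega




/-- the join of a clique on the first `s` vertices with everything else -/
def joinG (n s : ℕ) : SimpleGraph (Fin n) where
  Adj x y := x ≠ y ∧ (x.val < s ∨ y.val < s)
  symm := by constructor; intro x y ⟨h1, h2⟩; exact ⟨h1.symm, h2.symm⟩
  loopless := by constructor; intro x ⟨h1, _⟩; exact h1 rfl

lemma joinG_no_matching (n s ℓ : ℕ) (hs : s < ℓ) :
    ¬ HasMatching (joinG n s) ℓ := by
  rintro ⟨e, hadj, hinj⟩
  -- map each edge to an endpoint with val < s
  have hch : ∀ i : Fin ℓ, ∃ b : Bool,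
      ((if b then (e i).1 else (e i).2) : Fin n).val < s := by
    intro i
    rcases hadj i with ⟨-, h | h⟩
    · exact ⟨true, by simpa using h⟩
    · exact ⟨false, by simpa using h⟩
  choose b hb using hch
  let F : Fin ℓ → Fin s := fun i => ⟨_, hb i⟩
  have hFinj : Function.Injective F := by
    intro p q hpq
    have hv : ((if b p then (e p).1 else (e p).2) : Fin n).val
        = ((if b q then (e q).1 else (e q).2) : Fin n).val := congrArg (Fin.val : Fin s → ℕ) hpq
    have h2 : ((if b p then (e p).1 else (e p).2) : Fin n)
        = (if b q then (e q).1 else (e q).2) := Fin.ext hv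
    have := hinj (a₁ := (p, b p)) (a₂ := (q, b q)) (by simpa using h2)
    exact (Prod.ext_iff.mp this).1
  have := Fintype.card_le_of_injective F hFinj
  simp at this
  omega

lemma joinG_degree (n s : ℕ) (hs : s ≤ n) (v : Fin n) :
    (joinG n s).degree v = if v.val < s then n - 1 else s := by
  rw [← card_neighborFinset_eq_degree]
  by_cases hv : v.val < s
  · simp only [hv, if_true]
    have : (joinG n s).neighborFinset v = Finset.univ.erase v := by
      ext u
      simp only [SimpleGraph.mem_neighborFinset, Finset.mem_erase, Finset.mem_univ, and_true]
      constructor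
      · rintro ⟨h1, -⟩; exact fun h => h1 (h ▸ rfl)
      · intro h; exact ⟨fun hh => h (by rw [hh]), Or.inl hv⟩
    rw [this, Finset.card_erase_of_mem (Finset.mem_univ v), Finset.card_univ, Fintype.card_fin]
  · simp only [hv, if_false]
    have : (joinG n s).neighborFinset v = Finset.univ.filter (fun u : Fin n => u.val < s) := by
      ext u
      simp only [SimpleGraph.mem_neighborFinset, Finset.mem_filter, Finset.mem_univ, true_and]
      constructor
      · rintro ⟨h1, h | h⟩
        · omega
        · exact h
      · intro h
        refine ⟨fun hh => ?_, Or.inr h⟩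
        rw [hh] at hv; exact hv h
    rw [this, card_val_lt n s hs]

lemma joinG_card_edges (n s : ℕ) (hs : 2 * s < n) :
    2 * (joinG n s).edgeFinset.card = s * (n - 1) + (n - s) * s := by
  have hsum := SimpleGraph.sum_degrees_eq_twice_card_edges (joinG n s)
  have hsn : s ≤ n := by omega
  have : ∑ v : Fin n, (joinG n s).degree v = s * (n-1) + (n - s) * s := by
    calc ∑ v : Fin n, (joinG n s).degree v
        = ∑ v : Fin n, (if v.val < s then n - 1 else s) := by
          apply Finset.sum_congr rfl; intro v _; exact joinG_degree n s hsn v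
      _ = (Finset.univ.filter (fun v : Fin n => v.val < s)).card * (n-1)
          + (Finset.univ.filter (fun v : Fin n => ¬ v.val < s)).card * s := by
          rw [Finset.sum_ite, Finset.sum_const, Finset.sum_const]; simp [mul_comm]
      _ = s * (n - 1) + (n - s) * s := by
          rw [card_val_lt n s hsn]
          congr 1
          rw [Finset.filter_not, Finset.card_sdiff_of_subset (Finset.filter_subset _ _)]
          rw [card_val_lt n s hsn, Finset.card_univ, Fintype.card_fin]
  omega



variable {n : ℕ}

/-- `v` is a vertex whose edge to `j` gets moved to `i`. -/
def inA (G : SimpleGraph (Fin n)) (i j v : Fin n) : Prop :=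
  G.Adj j v ∧ ¬ G.Adj i v ∧ v ≠ i

lemma inA.ne_j {G : SimpleGraph (Fin n)} {i j v : Fin n} (h : inA G i j v) : v ≠ j :=
  fun hv => G.irrefl (hv ▸ h.1)

/-- the `(i,j)`-compression of `G`. -/
def compress (G : SimpleGraph (Fin n)) (i j : Fin n) : SimpleGraph (Fin n) where
  Adj x y := (G.Adj x y ∧ ¬((x = j ∧ inA G i j y) ∨ (y = j ∧ inA G i j x)))
             ∨ ((x = i ∧ inA G i j y) ∨ (y = i ∧ inA G i j x))
  symm := by
    constructor
    intro x y h
    rcases h with ⟨h1, h2⟩ | h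
    · exact Or.inl ⟨h1.symm, fun hc => h2 hc.symm⟩
    · exact Or.inr h.symm
  loopless := by
    constructor
    intro x h
    rcases h with ⟨h1, -⟩ | ⟨h1, h2, h3, h4⟩ | ⟨h1, h2, h3, h4⟩
    · exact G.irrefl h1
    · exact h4 h1
    · exact h4 h1

noncomputable def Afin (G : SimpleGraph (Fin n)) (i j : Fin n) : Finset (Fin n) :=
  Finset.univ.filter (inA G i j)

lemma mem_Afin {G : SimpleGraph (Fin n)} {i j v : Fin n} :
    v ∈ Afin G i j ↔ inA G i j v := by simp [Afin]

lemma edgeFinset_compress (G : SimpleGraph (Fin n)) (i j : Fin n) :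
    (compress G i j).edgeFinset =
      (G.edgeFinset \ (Afin G i j).image (fun v => s(j, v)))
        ∪ (Afin G i j).image (fun v => s(i, v)) := by
  ext e
  refine Sym2.inductionOn e ?_
  intro x y
  simp only [mem_edgeFinset, mem_union, mem_sdiff, Finset.mem_image, mem_Afin,
    SimpleGraph.mem_edgeSet]
  have hD : (∃ v, inA G i j v ∧ s(j, v) = s(x, y)) ↔
      ((x = j ∧ inA G i j y) ∨ (y = j ∧ inA G i j x)) := by
    constructor
    · rintro ⟨v, hv, hs⟩
      rw [Sym2.eq_iff] at hs
      rcases hs with ⟨h1, h2⟩ | ⟨h1, h2⟩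
      · exact Or.inl ⟨h1.symm, h2 ▸ hv⟩
      · exact Or.inr ⟨h1.symm, h2 ▸ hv⟩
    · rintro (⟨h1, h2⟩ | ⟨h1, h2⟩)
      · exact ⟨y, h2, by rw [h1]⟩
      · exact ⟨x, h2, by rw [h1, Sym2.eq_swap]⟩
  have hI : (∃ v, inA G i j v ∧ s(i, v) = s(x, y)) ↔
      ((x = i ∧ inA G i j y) ∨ (y = i ∧ inA G i j x)) := by
    constructor
    · rintro ⟨v, hv, hs⟩
      rw [Sym2.eq_iff] at hs
      rcases hs with ⟨h1, h2⟩ | ⟨h1, h2⟩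
      · exact Or.inl ⟨h1.symm, h2 ▸ hv⟩
      · exact Or.inr ⟨h1.symm, h2 ▸ hv⟩
    · rintro (⟨h1, h2⟩ | ⟨h1, h2⟩)
      · exact ⟨y, h2, by rw [h1]⟩
      · exact ⟨x, h2, by rw [h1, Sym2.eq_swap]⟩
  rw [hD, hI]
  rfl

lemma sjv_injOn {G : SimpleGraph (Fin n)} {i j : Fin n} {w : Fin n} (hw : ∀ v ∈ Afin G i j, v ≠ w) :
    ∀ x ∈ Afin G i j, ∀ y ∈ Afin G i j, s(w, x) = s(w, y) → x = y := by
  intro x hx y hy hs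
  rw [Sym2.eq_iff] at hs
  rcases hs with ⟨-, h⟩ | ⟨h1, h2⟩
  · exact h
  · exact h2.trans h1

lemma card_compress (G : SimpleGraph (Fin n)) (i j : Fin n) :
    (compress G i j).edgeFinset.card = G.edgeFinset.card := by
  rw [edgeFinset_compress]
  have hvi : ∀ v ∈ Afin G i j, v ≠ i := fun v hv => (mem_Afin.mp hv).2.2
  have hvj : ∀ v ∈ Afin G i j, v ≠ j := fun v hv => (mem_Afin.mp hv).ne_j
  have hDsub : (Afin G i j).image (fun v => s(j, v)) ⊆ G.edgeFinset := by
    intro e he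
    rcases Finset.mem_image.mp he with ⟨v, hv, rfl⟩
    exact mem_edgeFinset.mpr (mem_Afin.mp hv).1
  have hdisj : Disjoint ((Afin G i j).image (fun v => s(i, v)))
      (G.edgeFinset \ (Afin G i j).image (fun v => s(j, v))) := by
    rw [Finset.disjoint_left]
    intro e he he'
    rcases Finset.mem_image.mp he with ⟨v, hv, rfl⟩
    have := mem_edgeFinset.mp (Finset.mem_sdiff.mp he').1
    rw [SimpleGraph.mem_edgeSet] at this
    exact (mem_Afin.mp hv).2.1 this
  rw [Finset.union_comm, Finset.card_union_of_disjoint hdisj,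
    Finset.card_sdiff_of_subset hDsub, Finset.card_image_of_injOn ?_, Finset.card_image_of_injOn ?_]
  · have := Finset.card_le_card hDsub
    rw [Finset.card_image_of_injOn (sjv_injOn hvj)] at this
    omega
  · intro x hx y hy h; exact sjv_injOn hvj x hx y hy h
  · intro x hx y hy h; exact sjv_injOn hvi x hx y hy h

/-- total weight of a graph: sum over edges of endpoint indices -/
noncomputable def wt (G : SimpleGraph (Fin n)) : ℕ :=
  ∑ e ∈ G.edgeFinset, (Sym2.lift ⟨fun a b => a.val + b.val, fun _ _ => by ring⟩) e

lemma wt_compress_lt {G : SimpleGraph (Fin n)} {i j : Fin n} (hij : i < j)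
    (hA : (Afin G i j).Nonempty) : wt (compress G i j) < wt G := by
  classical
  unfold wt
  rw [edgeFinset_compress]
  have hvi : ∀ v ∈ Afin G i j, v ≠ i := fun v hv => (mem_Afin.mp hv).2.2
  have hvj : ∀ v ∈ Afin G i j, v ≠ j := fun v hv => (mem_Afin.mp hv).ne_j
  have hDsub : (Afin G i j).image (fun v => s(j, v)) ⊆ G.edgeFinset := by
    intro e he
    rcases Finset.mem_image.mp he with ⟨v, hv, rfl⟩
    exact mem_edgeFinset.mpr (mem_Afin.mp hv).1
  have hdisj : Disjoint ((Afin G i j).image (fun v => s(i, v)))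
      (G.edgeFinset \ (Afin G i j).image (fun v => s(j, v))) := by
    rw [Finset.disjoint_left]
    intro e he he'
    rcases Finset.mem_image.mp he with ⟨v, hv, rfl⟩
    have := mem_edgeFinset.mp (Finset.mem_sdiff.mp he').1
    rw [SimpleGraph.mem_edgeSet] at this
    exact (mem_Afin.mp hv).2.1 this
  rw [Finset.union_comm, Finset.sum_union hdisj]
  set f := (Sym2.lift ⟨fun (a b : Fin n) => a.val + b.val, fun _ _ => by ring⟩)
  have hsdiff : ∑ e ∈ (G.edgeFinset \ (Afin G i j).image (fun v => s(j, v))), f e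
      + ∑ e ∈ (Afin G i j).image (fun v => s(j, v)), f e = ∑ e ∈ G.edgeFinset, f e :=
    Finset.sum_sdiff hDsub
  have hI : ∑ e ∈ (Afin G i j).image (fun v => s(i, v)), f e
      = ∑ v ∈ Afin G i j, (i.val + v.val) := by
    rw [Finset.sum_image (sjv_injOn hvi)]
    rfl
  have hDs : ∑ e ∈ (Afin G i j).image (fun v => s(j, v)), f e
      = ∑ v ∈ Afin G i j, (j.val + v.val) := by
    rw [Finset.sum_image (sjv_injOn hvj)]
    rfl
  have hlt : ∑ v ∈ Afin G i j, (i.val + v.val) < ∑ v ∈ Afin G i j, (j.val + v.val) := by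
    apply Finset.sum_lt_sum_of_nonempty hA
    intro v _
    have : i.val < j.val := hij
    omega
  omega



variable {n : ℕ}




lemma hasMatching_compress {G : SimpleGraph (Fin n)} {i j : Fin n} (hij : i ≠ j) {ℓ : ℕ}
    (h : HasMatching (compress G i j) ℓ) : HasMatching G ℓ := by
  obtain ⟨e, hadj, hinj⟩ := h
  by_cases hall : ∀ r, G.Adj (e r).1 (e r).2
  · exact ⟨e, hall, hinj⟩
  push_neg at hall
  obtain ⟨r, hr⟩ := hall
  -- the endpoint function
  set F : Fin ℓ × Bool → Fin n := fun p => if p.2 then (e p.1).1 else (e p.1).2 with hF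
  -- i occurs only in edge r
  have hadjr := hadj r
  have hri : (e r).1 = i ∧ inA G i j (e r).2 ∨ (e r).2 = i ∧ inA G i j (e r).1 := by
    rcases hadjr with ⟨h1, -⟩ | h
    · exact absurd h1 hr
    · exact h
  have hionly : ∀ s : Fin ℓ, s ≠ r → (e s).1 ≠ i ∧ (e s).2 ≠ i := by
    intro s hs
    constructor
    · intro hc
      have h1 : F (s, true) = i := by simp [hF, hc]
      have h2 : F (r, true) = i ∨ F (r, false) = i := by
        rcases hri with ⟨h, -⟩ | ⟨h, -⟩
        · exact Or.inl (by simp [hF, h])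
        · exact Or.inr (by simp [hF, h])
      rcases h2 with h2 | h2 <;>
        [skip; skip] <;>
        · have := hinj (h1.trans h2.symm)
          simp only [Prod.mk.injEq] at this
          exact hs this.1
    · intro hc
      have h1 : F (s, false) = i := by simp [hF, hc]
      have h2 : F (r, true) = i ∨ F (r, false) = i := by
        rcases hri with ⟨h, -⟩ | ⟨h, -⟩
        · exact Or.inl (by simp [hF, h])
        · exact Or.inr (by simp [hF, h])
      rcases h2 with h2 | h2 <;>
        [skip; skip] <;>
        · have := hinj (h1.trans h2.symm)
          simp only [Prod.mk.injEq] at this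
          exact hs this.1
  -- swap i and j
  set σ : Equiv.Perm (Fin n) := Equiv.swap i j with hσ
  refine ⟨fun s => (σ ((e s).1), σ ((e s).2)), ?_, ?_⟩
  · intro s
    show G.Adj (σ ((e s).1)) (σ ((e s).2))
    by_cases hsr : s = r
    · subst hsr
      rcases hri with ⟨h1, h2⟩ | ⟨h1, h2⟩
      · rw [h1, hσ]
        rw [Equiv.swap_apply_left, Equiv.swap_apply_of_ne_of_ne h2.2.2 h2.ne_j]
        exact h2.1
      · rw [h1, hσ]
        rw [Equiv.swap_apply_left, Equiv.swap_apply_of_ne_of_ne h2.2.2 h2.ne_j]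
        exact (h2.1).symm
    · obtain ⟨hx, hy⟩ := hionly s hsr
      have hGadj : G.Adj (e s).1 (e s).2 ∧
          ¬(((e s).1 = j ∧ inA G i j (e s).2) ∨ ((e s).2 = j ∧ inA G i j (e s).1)) := by
        rcases hadj s with h | (⟨h1, -⟩ | ⟨h1, -⟩)
        · exact h
        · exact absurd h1 hx
        · exact absurd h1 hy
      obtain ⟨hG1, hG2⟩ := hGadj
      by_cases hxj : (e s).1 = j
      · -- (e s).1 = j, so ¬ inA (e s).2 ; since Adj j (e s).2 and (e s).2 ≠ i, get Adj i (e s).2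
        have hyj : (e s).2 ≠ j := fun hc => G.irrefl (hc ▸ hxj ▸ hG1)
        have hnA : ¬ inA G i j (e s).2 := fun hA => hG2 (Or.inl ⟨hxj, hA⟩)
        have hAdjj : G.Adj j (e s).2 := hxj ▸ hG1
        have hAdji : G.Adj i (e s).2 := by
          by_contra hc
          exact hnA ⟨hAdjj, hc, hy⟩
        rw [hxj, hσ, Equiv.swap_apply_right, Equiv.swap_apply_of_ne_of_ne hy hyj]
        exact hAdji
      · by_cases hyj : (e s).2 = j
        · have hnA : ¬ inA G i j (e s).1 := fun hA => hG2 (Or.inr ⟨hyj, hA⟩)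
          have hAdjj : G.Adj j (e s).1 := (hyj ▸ hG1).symm
          have hAdji : G.Adj i (e s).1 := by
            by_contra hc
            exact hnA ⟨hAdjj, hc, hx⟩
          rw [hyj, hσ, Equiv.swap_apply_right, Equiv.swap_apply_of_ne_of_ne hx hxj]
          exact hAdji.symm
        · rw [hσ, Equiv.swap_apply_of_ne_of_ne hx hxj, Equiv.swap_apply_of_ne_of_ne hy hyj]
          exact hG1
  · have : (fun p : Fin ℓ × Bool =>
        if p.2 then (σ ((e p.1).1), σ ((e p.1).2)).1 else (σ ((e p.1).1), σ ((e p.1).2)).2)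
        = σ ∘ F := by
      funext p
      rcases p with ⟨s, b⟩
      cases b <;> simp [hF]
    rw [this]
    exact σ.injective.comp hinj

def Shifted (G : SimpleGraph (Fin n)) : Prop :=
  ∀ i j v : Fin n, i < j → v ≠ i → v ≠ j → G.Adj j v → G.Adj i v



variable {n : ℕ}



lemma shifted_edge_struct {G : SimpleGraph (Fin n)} (hsh : Shifted G)
    {k m : Fin n} (hkm : k < m) (hna : ¬ G.Adj k m)
    {a b : Fin n} (hab : G.Adj a b) :
    a.val < k.val ∨ b.val < k.val ∨ (a.val < m.val ∧ b.val < m.val) := by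
  by_contra hc
  push_neg at hc
  obtain ⟨ha, hb, hm⟩ := hc
  have key : ∀ x y : Fin n, G.Adj x y → k.val ≤ x.val → m.val ≤ y.val → False := by
    intro x y hxy hx hy
    have hkmv : k.val < m.val := hkm
    have hyk : y ≠ k := by intro h; subst h; omega
    have h1 : G.Adj k y := by
      by_cases hxk : x = k
      · exact hxk ▸ hxy
      · have : k < x := by
          rw [Fin.lt_def]
          rcases Nat.lt_or_ge k.val x.val with h | h
          · exact h
          · exact absurd (Fin.ext (Nat.le_antisymm h hx) : x = k) hxk
        exact hsh k x y this hyk (G.ne_of_adj hxy.symm) hxy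
    by_cases hym : y = m
    · exact hna (hym ▸ h1)
    · have hmy : m < y := by
        rw [Fin.lt_def]
        rcases Nat.lt_or_ge m.val y.val with h | h
        · exact h
        · exact absurd (Fin.ext (Nat.le_antisymm h hy) : y = m) hym
      have : G.Adj m k := by
        apply hsh m y k hmy ?_ ?_ h1.symm
        · intro h; rw [h] at hkmv; omega
        · intro h; rw [← h] at hy; omega
      exact hna this.symm
  rcases le_or_gt m.val a.val with h | h
  · exact key b a hab.symm hb h
  · exact key a b hab ha (hm h)

lemma shifted_no_matching_bound (G : SimpleGraph (Fin n)) (ℓ : ℕ) (hℓ : 0 < ℓ)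
    (hln : 2 * ℓ ≤ n) (hsh : Shifted G) (hnm : ¬ HasMatching G ℓ) :
    ∃ k : ℕ, k < ℓ ∧
      2 * G.edgeFinset.card ≤
        k * (n-1) + (2*ℓ-1-2*k) * (2*ℓ-2-k) + (n-(2*ℓ-1-k)) * k := by
  have hcan : ¬ ∀ k : ℕ, (hk : k < ℓ) →
      G.Adj ⟨k, by omega⟩ ⟨2*ℓ-1-k, by omega⟩ := by
    intro hall
    apply hnm
    refine ⟨fun i => (⟨i.val, by omega⟩, ⟨2*ℓ-1-i.val, by omega⟩), fun i => hall i.val i.isLt, ?_⟩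
    rintro ⟨a, ba⟩ ⟨c, bc⟩ h
    have ha := a.isLt
    have hc := c.isLt
    have hval := congrArg Fin.val h
    dsimp only at hval
    cases ba <;> cases bc <;> simp only [if_true, if_false, Bool.false_eq_true] at hval
    · exact Prod.ext (by ext; dsimp; omega) rfl
    · exfalso; omega
    · exfalso; omega
    · exact Prod.ext (by ext; dsimp; omega) rfl
  push_neg at hcan
  obtain ⟨k, hk, hna⟩ := hcan
  refine ⟨k, hk, ?_⟩
  set m := 2*ℓ-1-k with hm
  have hkmv : k < m := by omega
  have hmn : m < n := by omega
  have hKM : (⟨k, by omega⟩ : Fin n) < ⟨m, by omega⟩ := by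
    rw [Fin.lt_def]; exact hkmv
  -- degree caps
  have hcap : ∀ v : Fin n, G.degree v ≤
      (if v.val < k then n - 1 else if v.val < m then m - 1 else k) := by
    intro v
    by_cases h1 : v.val < k
    · simp only [h1, if_true]
      have := G.degree_lt_card_verts v
      rw [Fintype.card_fin] at this
      omega
    · simp only [h1, if_false]
      by_cases h2 : v.val < m
      · simp only [h2, if_true]
        rw [← card_neighborFinset_eq_degree]
        have hsub : G.neighborFinset v ⊆
            (Finset.univ.filter (fun u : Fin n => u.val < m)).erase v := by
          intro u hu
          rw [SimpleGraph.mem_neighborFinset] at hu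
          have := shifted_edge_struct hsh hKM hna hu
          simp only [Fin.val_mk] at this
          rw [Finset.mem_erase]
          refine ⟨G.ne_of_adj hu.symm, ?_⟩
          simp only [Finset.mem_filter, Finset.mem_univ, true_and]
          omega
        have hle := Finset.card_le_card hsub
        rw [Finset.card_erase_of_mem (by simp [h2]), card_val_lt n m (le_of_lt hmn)] at hle
        exact hle
      · simp only [h2, if_false]
        rw [← card_neighborFinset_eq_degree]
        have hsub : G.neighborFinset v ⊆
            Finset.univ.filter (fun u : Fin n => u.val < k) := by
          intro u hu
          rw [SimpleGraph.mem_neighborFinset] at hu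
          have := shifted_edge_struct hsh hKM hna hu
          simp only [Fin.val_mk] at this
          simp only [Finset.mem_filter, Finset.mem_univ, true_and]
          omega
        have hle := Finset.card_le_card hsub
        rw [card_val_lt n k (by omega)] at hle
        exact hle
  -- sum the caps
  have hsum := SimpleGraph.sum_degrees_eq_twice_card_edges G
  have hsumle : ∑ v : Fin n, G.degree v ≤
      ∑ v : Fin n, (if v.val < k then n - 1 else if v.val < m then m - 1 else k) :=
    Finset.sum_le_sum (fun v _ => hcap v)
  have hsumval : ∑ v : Fin n, (if v.val < k then n - 1 else if v.val < m then m - 1 else k)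
      = k * (n-1) + (m-k) * (m-1) + (n-m) * k := by
    rw [Fin.sum_univ_eq_sum_range (fun x => if x < k then n - 1 else if x < m then m - 1 else k) n]
    rw [Finset.range_eq_Ico]
    rw [← Finset.sum_Ico_consecutive _ (Nat.zero_le m) (le_of_lt hmn),
      ← Finset.sum_Ico_consecutive _ (Nat.zero_le k) (le_of_lt hkmv)]
    have e1 : ∑ x ∈ Finset.Ico 0 k, (if x < k then n - 1 else if x < m then m - 1 else k)
        = k * (n-1) := by
      rw [Finset.sum_congr rfl (fun x hx => ?_), Finset.sum_const, Nat.card_Ico, smul_eq_mul,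
        Nat.sub_zero]
      rw [Finset.mem_Ico] at hx
      simp [hx.2]
    have e2 : ∑ x ∈ Finset.Ico k m, (if x < k then n - 1 else if x < m then m - 1 else k)
        = (m-k) * (m-1) := by
      rw [Finset.sum_congr rfl (fun x hx => ?_), Finset.sum_const, Nat.card_Ico, smul_eq_mul]
      rw [Finset.mem_Ico] at hx
      have : ¬ x < k := by omega
      simp [this, hx.2]
    have e3 : ∑ x ∈ Finset.Ico m n, (if x < k then n - 1 else if x < m then m - 1 else k)
        = (n-m) * k := by
      rw [Finset.sum_congr rfl (fun x hx => ?_), Finset.sum_const, Nat.card_Ico, smul_eq_mul]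
      rw [Finset.mem_Ico] at hx
      have h1 : ¬ x < k := by omega
      have h2 : ¬ x < m := by omega
      simp [h1, h2]
    rw [e1, e2, e3]
  have hfinal : m - k = 2*ℓ-1-2*k := by omega
  have hfinal2 : m - 1 = 2*ℓ-2-k := by omega
  rw [hsumval, hfinal, hfinal2] at hsumle
  omega



lemma two_mul_choose_two (x : ℕ) : 2 * x.choose 2 = x * (x - 1) := by
  rw [Nat.choose_two_right]
  have h2 : 2 ∣ x * (x - 1) := by
    rcases Nat.even_or_odd x with he | ho
    · exact Dvd.dvd.mul_right he.two_dvd _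
    · rcases x with _ | x
      · simp
      · simp only [Nat.succ_sub_one]
        exact Dvd.dvd.mul_left (Nat.Odd.sub_odd ho odd_one).two_dvd _
  exact Nat.mul_div_cancel' h2

lemma int_convex (N L K : ℤ) (hK : 0 ≤ K) (hKL : K ≤ L - 1) (hL : 2 ≤ L) (hLN : 2*L ≤ N)
    (h : (2*L-1)*(2*L-2) < K*(N-1) + (2*L-1-2*K)*(2*L-2-K) + (N-(2*L-1-K))*K) :
    K*(N-1) + (2*L-1-2*K)*(2*L-2-K) + (N-(2*L-1-K))*K
      ≤ 2*((L-1)*(N-L+1)) + (L-1)*(L-2) := by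
  have hid : (L-1) * (K*(N-1) + (2*L-1-2*K)*(2*L-2-K) + (N-(2*L-1-K))*K)
      = (L-1-K) * ((2*L-1)*(2*L-2)) + K * (2*((L-1)*(N-L+1)) + (L-1)*(L-2))
        - 3*(L-1)*K*(L-1-K) := by ring
  rcases eq_or_lt_of_le hK with hK0 | hKpos
  · exfalso
    rw [← hK0] at hid
    simp at hid
    nlinarith [hid, h]
  · -- K > 0
    have h1 : (L-1-K) * ((2*L-1)*(2*L-2)) ≤ (L-1-K) * (K*(N-1) + (2*L-1-2*K)*(2*L-2-K) + (N-(2*L-1-K))*K) :=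
      mul_le_mul_of_nonneg_left h.le (by linarith)
    have h2 : 3*(L-1)*K*(L-1-K) ≥ 0 := by
      apply mul_nonneg
      apply mul_nonneg
      apply mul_nonneg <;> linarith
      · linarith
      · linarith
    nlinarith [hid, h1, h2, hKpos]

lemma arith_convex (n ℓ k : ℕ) (hℓ : 0 < ℓ) (hk : k < ℓ) (hln : 2*ℓ ≤ n) :
    k * (n-1) + (2*ℓ-1-2*k) * (2*ℓ-2-k) + (n-(2*ℓ-1-k)) * k
      ≤ 2 * max ((ℓ - 1) * (n - ℓ + 1) + (ℓ - 1).choose 2) ((2 * ℓ - 1).choose 2) := by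
  set T1 := (ℓ - 1) * (n - ℓ + 1) + (ℓ - 1).choose 2 with hT1
  set T2 := (2 * ℓ - 1).choose 2 with hT2
  have h2T2 : 2 * T2 = (2*ℓ-1) * (2*ℓ-2) := by
    rw [hT2, two_mul_choose_two, show 2*ℓ-1-1 = 2*ℓ-2 from by omega]
  have h2T1 : 2 * T1 = 2 * ((ℓ-1) * (n-ℓ+1)) + (ℓ-1) * (ℓ-2) := by
    rw [hT1, Nat.mul_add, two_mul_choose_two, show ℓ-1-1 = ℓ-2 from by omega]
  rcases lt_or_ge (2 * T2) (k * (n-1) + (2*ℓ-1-2*k) * (2*ℓ-2-k) + (n-(2*ℓ-1-k)) * k) with h | h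
  case inr =>
    calc _ ≤ 2 * T2 := h
      _ ≤ 2 * max T1 T2 := Nat.mul_le_mul_left 2 (le_max_right T1 T2)
  · rcases Nat.lt_or_ge ℓ 2 with hl2 | hl2
    · -- ℓ = 1, k = 0
      have hl1 : ℓ = 1 := by omega
      have hk0 : k = 0 := by omega
      subst hl1; subst hk0
      simp
    · have hgoal : k * (n-1) + (2*ℓ-1-2*k) * (2*ℓ-2-k) + (n-(2*ℓ-1-k)) * k ≤ 2 * T1 := by
        rw [h2T1]
        rw [h2T2] at h
        zify [show 1 ≤ n by omega, show 2*k ≤ 2*ℓ-1 by omega, show k ≤ 2*ℓ-2 by omega,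
          show 2*ℓ-1-k ≤ n by omega, show 1 ≤ 2*ℓ by omega, show ℓ ≤ n by omega,
          show 1 ≤ ℓ by omega, show k ≤ 2*ℓ-1 by omega, show 2 ≤ ℓ by omega,
          show 2 ≤ 2*ℓ by omega] at h ⊢
        exact int_convex (n:ℤ) (ℓ:ℤ) (k:ℤ) (by omega) (by omega) (by omega) (by omega) h
      calc _ ≤ 2 * T1 := hgoal
        _ ≤ 2 * max T1 T2 := Nat.mul_le_mul_left 2 (le_max_left T1 T2)



lemma exists_shifted {n : ℕ} (G : SimpleGraph (Fin n)) :
    ∃ G' : SimpleGraph (Fin n), Shifted G' ∧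
      (∀ ℓ, HasMatching G' ℓ → HasMatching G ℓ) ∧
      G'.edgeFinset.card = G.edgeFinset.card := by
  suffices H : ∀ (N : ℕ) (G : SimpleGraph (Fin n)), wt G ≤ N →
      ∃ G' : SimpleGraph (Fin n), Shifted G' ∧
        (∀ ℓ, HasMatching G' ℓ → HasMatching G ℓ) ∧
        G'.edgeFinset.card = G.edgeFinset.card from H (wt G) G le_rfl
  intro N
  induction N with
  | zero =>
    intro G hw
    by_cases hs : Shifted G
    · exact ⟨G, hs, fun _ h => h, rfl⟩
    · exfalso
      unfold Shifted at hs
      push_neg at hs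
      obtain ⟨i, j, v, hij, hvi, hvj, hadj, hni⟩ := hs
      have hA : (Afin G i j).Nonempty := ⟨v, mem_Afin.mpr ⟨hadj, hni, hvi⟩⟩
      have := wt_compress_lt hij hA
      omega
  | succ N ih =>
    intro G hw
    by_cases hs : Shifted G
    · exact ⟨G, hs, fun _ h => h, rfl⟩
    · unfold Shifted at hs
      push_neg at hs
      obtain ⟨i, j, v, hij, hvi, hvj, hadj, hni⟩ := hs
      have hA : (Afin G i j).Nonempty := ⟨v, mem_Afin.mpr ⟨hadj, hni, hvi⟩⟩
      have hlt := wt_compress_lt hij hA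
      obtain ⟨G', h1, h2, h3⟩ := ih (compress G i j) (by omega)
      exact ⟨G', h1, fun ℓ hm => hasMatching_compress (ne_of_lt hij) (h2 ℓ hm),
        h3.trans (card_compress G i j)⟩

lemma ncard_eq_card_edgeFinset {n : ℕ} (G : SimpleGraph (Fin n)) :
    G.edgeSet.ncard = G.edgeFinset.card := by
  rw [Set.ncard_eq_toFinset_card']
  exact congrArg Finset.card (by ext; simp)

end EG

open EG

/-- **Erdős–Gallai (1959).** For `ℓ ≤ n/2`, the maximum number of edges of an
`n`-vertex graph containing no matching of size `ℓ` equals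
`max { (ℓ-1)(n-ℓ+1) + C(ℓ-1,2), C(2ℓ-1,2) }`. -/
theorem erdos_gallai (n ℓ : ℕ) (hn : 0 < n) (hℓ : 0 < ℓ) (hln : 2 * ℓ ≤ n) :
    IsGreatest
      {m : ℕ | ∃ G : SimpleGraph (Fin n), ¬ HasMatching G ℓ ∧ G.edgeSet.ncard = m}
      (max ((ℓ - 1) * (n - ℓ + 1) + (ℓ - 1).choose 2) ((2 * ℓ - 1).choose 2)) := by
  constructor
  · -- membership: an extremal construction
    rcases le_total ((ℓ - 1) * (n - ℓ + 1) + (ℓ - 1).choose 2) ((2 * ℓ - 1).choose 2) with h | h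
    · rw [max_eq_right h]
      refine ⟨cliqueG n (2*ℓ-1), cliqueG_no_matching n (2*ℓ-1) ℓ (by omega), ?_⟩
      rw [ncard_eq_card_edgeFinset, cliqueG_card_edges n (2*ℓ-1) (by omega)]
    · rw [max_eq_left h]
      refine ⟨joinG n (ℓ-1), joinG_no_matching n (ℓ-1) ℓ (by omega), ?_⟩
      rw [ncard_eq_card_edgeFinset]
      have hcnt := joinG_card_edges n (ℓ-1) (by omega)
      have h2T1 : 2 * ((ℓ - 1) * (n - ℓ + 1) + (ℓ - 1).choose 2)
          = (ℓ-1) * (n-1) + (n - (ℓ-1)) * (ℓ-1) := by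
        rw [Nat.mul_add, two_mul_choose_two]
        rcases Nat.lt_or_ge ℓ 2 with h1 | h2
        · have : ℓ = 1 := by omega
          subst this
          simp
        · rw [show ℓ - 1 - 1 = ℓ - 2 from by omega]
          zify [show 1 ≤ ℓ by omega, show ℓ ≤ n by omega, show 2 ≤ ℓ by omega,
            show ℓ - 1 ≤ n by omega, show 1 ≤ n by omega]
          ring
      omega
  · -- upper bound
    rintro m ⟨G, hnm, rfl⟩
    rw [ncard_eq_card_edgeFinset]
    obtain ⟨G', hsh, himp, hcard⟩ := exists_shifted G
    have hnm' : ¬ HasMatching G' ℓ := fun h => hnm (himp ℓ h)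
    obtain ⟨k, hk, hbound⟩ := shifted_no_matching_bound G' ℓ hℓ hln hsh hnm'
    have harith := arith_convex n ℓ k hℓ hk hln
    omega
end

section
/- For all positive integers s, t there exists a constant C = C(s,t) such that the following holds: whenever a, b are positive integers such that the pair (a,b) dominates the pair (s,t), the complete bipartite graph K_{a,b} contains a K_{s,t}-tiling covering all but at most C vertices of K_{a,b}. -/
/-- `G` contains `k` pairwise vertex-disjoint copies of `H`. -/
def HasTiling {α β : Type*} (H : SimpleGraph α) (G : SimpleGraph β) (k : ℕ) : Prop :=
  ∃ f : Fin k → α → β,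
    (∀ i, Function.Injective (f i)) ∧
    (∀ i u v, H.Adj u v → G.Adj (f i u) (f i v)) ∧
    (∀ i j : Fin k, i ≠ j → ∀ u v, f i u ≠ f j v)

/-- The pair `(a,b)` dominates the pair `(x,y)` if
`max{x,y}/min{x,y} ≥ max{a,b}/min{a,b}`. -/
def Dominates (a b x y : ℝ) : Prop :=
  max a b / min a b ≤ max x y / min x y


lemma divb (x D : ℕ) (hD : 0 < D) : (x / D) * D ≤ x ∧ x < (x / D + 1) * D := by
  refine ⟨Nat.div_mul_le_self x D, ?_⟩
  have h1 := Nat.div_add_mod x D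
  have h2 := Nat.mod_lt x hD
  have h3 : (x / D + 1) * D = D * (x/D) + D := by ring
  omega

lemma lemA (s t a b : ℕ) (hs : 0 < s) (hst : s ≤ t) (hab : a ≤ b)
    (hdom : b*s ≤ a*t) :
    ∃ p q : ℕ, p*s + q*t ≤ a ∧ p*t + q*s ≤ b ∧ a + b ≤ (p+q)*(s+t) + 2*(s+t) := by
  rcases eq_or_lt_of_le hst with rfl | hlt
  · -- s = t
    have hba : b ≤ a := Nat.le_of_mul_le_mul_right hdom hs
    have hab' : a = b := le_antisymm hab hba
    subst hab'
    refine ⟨a / s, 0, ?_, ?_, ?_⟩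
    · simpa using Nat.div_mul_le_self a s
    · simpa using Nat.div_mul_le_self a s
    · obtain ⟨h1, h2⟩ := divb a s hs
      have h3 : (a/s + 0)*(s+s) + 2*(s+s) = 2*((a/s+1)*s) + 2*s := by ring
      omega
  · -- s < t
    have hD : 0 < t*t - s*s := by
      have : s*s < t*t := Nat.mul_lt_mul_of_lt_of_lt hlt hlt
      omega
    have hss : s*s ≤ t*t := by omega
    have hPle : a*s ≤ b*t := Nat.mul_le_mul hab hst
    set D := t*t - s*s with hDdef
    refine ⟨(b*t - a*s) / D, (a*t - b*s) / D, ?_, ?_, ?_⟩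
    · obtain ⟨hp1, _⟩ := divb (b*t - a*s) D hD
      obtain ⟨hq1, _⟩ := divb (a*t - b*s) D hD
      have e : (b*t - a*s)*s + (a*t - b*s)*t = a*D := by
        zify [hPle, hdom, hss, hDdef]
        ring
      have key : ((b*t - a*s)/D*s + (a*t - b*s)/D*t) * D ≤ a * D := by
        calc ((b*t - a*s)/D*s + (a*t - b*s)/D*t) * D
            = ((b*t - a*s)/D*D)*s + ((a*t - b*s)/D*D)*t := by ring
          _ ≤ (b*t - a*s)*s + (a*t - b*s)*t :=
              Nat.add_le_add (Nat.mul_le_mul_right s hp1) (Nat.mul_le_mul_right t hq1)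
          _ = a*D := e
      exact Nat.le_of_mul_le_mul_right key hD
    · obtain ⟨hp1, _⟩ := divb (b*t - a*s) D hD
      obtain ⟨hq1, _⟩ := divb (a*t - b*s) D hD
      have e : (b*t - a*s)*t + (a*t - b*s)*s = b*D := by
        zify [hPle, hdom, hss, hDdef]
        ring
      have key : ((b*t - a*s)/D*t + (a*t - b*s)/D*s) * D ≤ b * D := by
        calc ((b*t - a*s)/D*t + (a*t - b*s)/D*s) * D
            = ((b*t - a*s)/D*D)*t + ((a*t - b*s)/D*D)*s := by ring
          _ ≤ (b*t - a*s)*t + (a*t - b*s)*s :=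
              Nat.add_le_add (Nat.mul_le_mul_right t hp1) (Nat.mul_le_mul_right s hq1)
          _ = b*D := e
      exact Nat.le_of_mul_le_mul_right key hD
    · obtain ⟨_, hp2⟩ := divb (b*t - a*s) D hD
      obtain ⟨_, hq2⟩ := divb (a*t - b*s) D hD
      have hts : 0 < t - s := by omega
      have e : (b*t - a*s) + (a*t - b*s) = (a+b)*(t-s) := by
        zify [hPle, hdom, hlt.le]
        ring
      have eD : D = (t+s)*(t-s) := by
        zify [hss, hlt.le, hDdef]
        ring
      have key : (a+b)*(t-s) < (((b*t-a*s)/D + (a*t-b*s)/D + 2)*(t+s)) * (t-s) := by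
        calc (a+b)*(t-s) = (b*t - a*s) + (a*t - b*s) := e.symm
          _ < ((b*t-a*s)/D + 1)*D + ((a*t-b*s)/D + 1)*D := by omega
          _ = (((b*t-a*s)/D + (a*t-b*s)/D + 2)*(t+s)) * (t-s) := by rw [eD]; ring
      have key2 := Nat.lt_of_mul_lt_mul_right key
      have e2 : ((b*t-a*s)/D + (a*t-b*s)/D + 2)*(t+s)
          = ((b*t-a*s)/D + (a*t-b*s)/D)*(s+t) + 2*(s+t) := by ring
      omega

lemma blk {i j n x : ℕ} (hij : i < j) (hx : x < n) : i*n + x < j*n := by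
  have h1 : (i+1)*n ≤ j*n := Nat.mul_le_mul_right n hij
  have h2 : (i+1)*n = i*n + n := by ring
  omega

lemma blkne {i j n x y : ℕ} (hij : i ≠ j) (hx : x < n) (hy : y < n) :
    i*n + x ≠ j*n + y := by
  rcases hij.lt_or_gt with h | h
  · exact Nat.ne_of_lt (lt_of_lt_of_le (blk h hx) (Nat.le_add_right _ _))
  · exact (Nat.ne_of_lt (lt_of_lt_of_le (blk h hy) (Nat.le_add_right _ _))).symm

lemma lemB (s t a b p q : ℕ) (h1 : p*s + q*t ≤ a) (h2 : p*t + q*s ≤ b) :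
    HasTiling (completeBipartiteGraph (Fin s) (Fin t))
      (completeBipartiteGraph (Fin a) (Fin b)) (p+q) := by
  have bndA : ∀ i : Fin (p+q), ∀ x : Fin s, (i:ℕ) < p → (i:ℕ)*s + (x:ℕ) < a :=
    fun i x hi => lt_of_lt_of_le (blk hi x.2) (le_trans (Nat.le_add_right _ _) h1)
  have bndB : ∀ i : Fin (p+q), ∀ y : Fin t, (i:ℕ) < p → (i:ℕ)*t + (y:ℕ) < b :=
    fun i y hi => lt_of_lt_of_le (blk hi y.2) (le_trans (Nat.le_add_right _ _) h2)
  have bndB' : ∀ i : Fin (p+q), ∀ x : Fin s, ¬ (i:ℕ) < p →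
      p*t + (((i:ℕ)-p)*s + (x:ℕ)) < b := by
    intro i x hi
    have hlt : (i:ℕ) - p < q := by omega
    have := blk hlt x.2
    omega
  have bndA' : ∀ i : Fin (p+q), ∀ y : Fin t, ¬ (i:ℕ) < p →
      p*s + (((i:ℕ)-p)*t + (y:ℕ)) < a := by
    intro i y hi
    have hlt : (i:ℕ) - p < q := by omega
    have := blk hlt y.2
    omega
  refine ⟨fun i u =>
    if hi : (i:ℕ) < p then
      match u with
      | .inl x => .inl ⟨(i:ℕ)*s + x, bndA i x hi⟩
      | .inr y => .inr ⟨(i:ℕ)*t + y, bndB i y hi⟩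
    else
      match u with
      | .inl x => .inr ⟨p*t + (((i:ℕ)-p)*s + x), bndB' i x hi⟩
      | .inr y => .inl ⟨p*s + (((i:ℕ)-p)*t + y), bndA' i y hi⟩, ?_, ?_, ?_⟩
  · -- injectivity
    intro i u v huv
    by_cases hi : (i:ℕ) < p
    · rcases u with x | y <;> rcases v with x' | y' <;>
        simp only [dif_pos hi, Sum.inl.injEq, Sum.inr.injEq, Fin.mk.injEq,
          reduceCtorEq] at huv
      · exact congrArg Sum.inl (Fin.ext (by omega))
      · exact congrArg Sum.inr (Fin.ext (by omega))
    · rcases u with x | y <;> rcases v with x' | y' <;>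
        simp only [dif_neg hi, Sum.inl.injEq, Sum.inr.injEq, Fin.mk.injEq,
          reduceCtorEq] at huv
      · exact congrArg Sum.inl (Fin.ext (by omega))
      · exact congrArg Sum.inr (Fin.ext (by omega))
  · -- adjacency
    intro i u v huv
    by_cases hi : (i:ℕ) < p
    · rcases u with x | y <;> rcases v with x' | y' <;>
        simp only [dif_pos hi] <;> simp_all
    · rcases u with x | y <;> rcases v with x' | y' <;>
        simp only [dif_neg hi] <;> simp_all
  · -- disjointness
    intro i j hij u v
    have hij' : (i:ℕ) ≠ (j:ℕ) := fun h => hij (Fin.ext h)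
    by_cases hi : (i:ℕ) < p <;> by_cases hj : (j:ℕ) < p
    · rcases u with x | y <;> rcases v with x' | y' <;>
        simp only [dif_pos hi, dif_pos hj, ne_eq, Sum.inl.injEq, Sum.inr.injEq,
          Fin.mk.injEq, reduceCtorEq, not_false_eq_true]
      · exact blkne hij' x.2 x'.2
      · exact blkne hij' y.2 y'.2
    · rcases u with x | y <;> rcases v with x' | y' <;>
        simp only [dif_pos hi, dif_neg hj, ne_eq, Sum.inl.injEq, Sum.inr.injEq,
          Fin.mk.injEq, reduceCtorEq, not_false_eq_true]
      · have := blk hi x.2; omega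
      · have := blk hi y.2; omega
    · rcases u with x | y <;> rcases v with x' | y' <;>
        simp only [dif_neg hi, dif_pos hj, ne_eq, Sum.inl.injEq, Sum.inr.injEq,
          Fin.mk.injEq, reduceCtorEq, not_false_eq_true]
      · have := blk hj y'.2; omega
      · have := blk hj x'.2; omega
    · rcases u with x | y <;> rcases v with x' | y' <;>
        simp only [dif_neg hi, dif_neg hj, ne_eq, Sum.inl.injEq, Sum.inr.injEq,
          Fin.mk.injEq, reduceCtorEq, not_false_eq_true]
      · have h : (i:ℕ) - p ≠ (j:ℕ) - p := by omega
        have := blkne h x.2 x'.2; omega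
      · have h : (i:ℕ) - p ≠ (j:ℕ) - p := by omega
        have := blkne h y.2 y'.2; omega

/-- For all positive integers `s, t` there is a constant `C` such that whenever
the pair `(a,b)` dominates `(s,t)`, the complete bipartite graph `K_{a,b}`
contains a `K_{s,t}`-tiling covering all but at most `C` vertices. -/
theorem tiling_complete_bipartite (s t : ℕ) (hs : 0 < s) (ht : 0 < t) :
    ∃ C : ℕ, ∀ a b : ℕ, 0 < a → 0 < b →
      Dominates (a : ℝ) (b : ℝ) (s : ℝ) (t : ℝ) →
      ∃ k : ℕ, HasTiling (completeBipartiteGraph (Fin s) (Fin t))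
          (completeBipartiteGraph (Fin a) (Fin b)) k ∧
        a + b ≤ k * (s + t) + C := by
  refine ⟨2*(s+t), fun a b ha hb hdom => ?_⟩
  have haR : (0:ℝ) < a := by exact_mod_cast ha
  have hbR : (0:ℝ) < b := by exact_mod_cast hb
  have hsR : (0:ℝ) < s := by exact_mod_cast hs
  have htR : (0:ℝ) < t := by exact_mod_cast ht
  unfold Dominates at hdom
  rcases le_total a b with hab | hab <;> rcases le_total s t with hst | hst
  · have h1 : (a:ℝ) ≤ b := by exact_mod_cast hab
    have h2 : (s:ℝ) ≤ t := by exact_mod_cast hst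
    rw [max_eq_right h1, min_eq_left h1, max_eq_right h2, min_eq_left h2,
      div_le_div_iff₀ haR hsR] at hdom
    have hd : b*s ≤ a*t := by
      rw [Nat.mul_comm a t]; exact_mod_cast hdom
    obtain ⟨p, q, hA, hB, hC⟩ := lemA s t a b hs hst hab hd
    exact ⟨p+q, lemB s t a b p q hA hB, hC⟩
  · have h1 : (a:ℝ) ≤ b := by exact_mod_cast hab
    have h2 : (t:ℝ) ≤ s := by exact_mod_cast hst
    rw [max_eq_right h1, min_eq_left h1, max_eq_left h2, min_eq_right h2,
      div_le_div_iff₀ haR htR] at hdom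
    have hd : b*t ≤ a*s := by
      rw [Nat.mul_comm a s]; exact_mod_cast hdom
    obtain ⟨p, q, hA, hB, hC⟩ := lemA t s a b ht hst hab hd
    refine ⟨q+p, lemB s t a b q p (by omega) (by omega), ?_⟩
    have e : (p+q)*(t+s) = (q+p)*(s+t) := by ring
    omega
  · have h1 : (b:ℝ) ≤ a := by exact_mod_cast hab
    have h2 : (s:ℝ) ≤ t := by exact_mod_cast hst
    rw [max_eq_left h1, min_eq_right h1, max_eq_right h2, min_eq_left h2,
      div_le_div_iff₀ hbR hsR] at hdom
    have hd : a*s ≤ b*t := by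
      rw [Nat.mul_comm b t]; exact_mod_cast hdom
    obtain ⟨p, q, hA, hB, hC⟩ := lemA s t b a hs hst hab hd
    refine ⟨q+p, lemB s t a b q p (by omega) (by omega), ?_⟩
    have e : (p+q)*(s+t) = (q+p)*(s+t) := by ring
    omega
  · have h1 : (b:ℝ) ≤ a := by exact_mod_cast hab
    have h2 : (t:ℝ) ≤ s := by exact_mod_cast hst
    rw [max_eq_left h1, min_eq_right h1, max_eq_left h2, min_eq_right h2,
      div_le_div_iff₀ hbR htR] at hdom
    have hd : a*t ≤ b*s := by
      rw [Nat.mul_comm b s]; exact_mod_cast hdom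
    obtain ⟨p, q, hA, hB, hC⟩ := lemA t s b a ht hst hab hd
    refine ⟨p+q, lemB s t a b p q (by omega) (by omega), ?_⟩
    have e : (p+q)*(t+s) = (p+q)*(s+t) := by ring
    omega
end

section
/- For every bipartite graph H and all γ, d > 0 there exists ε = ε(H,d,γ) > 0 such that the following holds. Suppose the complete bipartite graph K_{a,b} contains an H-tiling of size x. Let (A,B) be any ε-regular pair of density at least d with |A| = a and |B| = b. Then the bipartite graph on (A,B) contains an H-tiling of size at least x − γ(a+b). -/
/-- The number of (ordered) pairs `(a,b) ∈ A × B` with `a ~ b` in `G`. -/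
noncomputable def pairEdges {V : Type*} (G : SimpleGraph V) (A B : Finset V) : ℕ :=
  {p : V × V | p.1 ∈ A ∧ p.2 ∈ B ∧ G.Adj p.1 p.2}.ncard

/-- The density `d(A,B) = e(A,B) / (|A||B|)` of the pair `(A,B)` in `G`. -/
noncomputable def pairDensity {V : Type*} (G : SimpleGraph V) (A B : Finset V) : ℝ :=
  (pairEdges G A B : ℝ) / ((A.card : ℝ) * (B.card : ℝ))

/-- The pair `(A,B)` is `ε`-regular in `G`. -/
def IsRegularPair {V : Type*} (G : SimpleGraph V) (A B : Finset V) (ε : ℝ) : Prop :=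
  ∀ X ⊆ A, ∀ Y ⊆ B, ε * (A.card : ℝ) < (X.card : ℝ) → ε * (B.card : ℝ) < (Y.card : ℝ) →
    |pairDensity G X Y - pairDensity G A B| < ε

/-- The bipartite graph consisting of the edges of `G` between `A` and `B`. -/
def betweenPair {V : Type*} (G : SimpleGraph V) (A B : Finset V) : SimpleGraph V where
  Adj u v := G.Adj u v ∧ ((u ∈ A ∧ v ∈ B) ∨ (u ∈ B ∧ v ∈ A))
  symm := ⟨by rintro u v ⟨h, h'⟩; exact ⟨h.symm, h'.elim (fun hh => Or.inr ⟨hh.2, hh.1⟩) (fun hh => Or.inl ⟨hh.2, hh.1⟩)⟩⟩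
  loopless := ⟨fun v h => G.irrefl h.1⟩

open Finset
open scoped Classical


lemma pairEdges_eq_card {V : Type*} (G : SimpleGraph V) (X Y : Finset V) :
    pairEdges G X Y = ((X ×ˢ Y).filter (fun p => G.Adj p.1 p.2)).card := by
  rw [pairEdges, ← Set.ncard_coe_finset]
  congr 1
  ext p
  simp [Finset.mem_filter, Finset.mem_product, and_assoc]

lemma pairEdges_eq_sum {V : Type*} (G : SimpleGraph V) (X Y : Finset V) :
    pairEdges G X Y = ∑ x ∈ X, (Y.filter (fun y => G.Adj x y)).card := by
  rw [pairEdges_eq_card]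
  rw [Finset.card_eq_sum_card_fiberwise (f := fun p => p.1) (t := X)
    (fun p hp => (Finset.mem_product.mp (Finset.mem_filter.mp hp).1).1)]
  refine Finset.sum_congr rfl fun x hx => ?_
  refine Finset.card_bij (fun p _ => p.2) ?_ ?_ ?_
  · rintro ⟨p1, p2⟩ hp
    simp only [Finset.mem_filter, Finset.mem_product] at hp
    rcases hp with ⟨⟨⟨-, h2⟩, hadj⟩, h1⟩
    subst h1
    simp [h2, hadj]
  · rintro ⟨p1, p2⟩ hp ⟨q1, q2⟩ hq h
    simp only [Finset.mem_filter] at hp hq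
    simp_all
  · intro y hy
    simp only [Finset.mem_filter] at hy
    exact ⟨(x, y), by simp [Finset.mem_filter, Finset.mem_product, hx, hy.1, hy.2], rfl⟩


lemma pairDensity_lt_of_deg_lt {V : Type*} (G : SimpleGraph V) (X Y : Finset V) (c : ℝ)
    (hX : X.Nonempty) (hY : Y.Nonempty)
    (h : ∀ x ∈ X, ((Y.filter (fun y => G.Adj x y)).card : ℝ) < c * Y.card) :
    pairDensity G X Y < c := by
  have hXc : (0:ℝ) < X.card := by exact_mod_cast Finset.card_pos.mpr hX
  have hYc : (0:ℝ) < Y.card := by exact_mod_cast Finset.card_pos.mpr hY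
  rw [pairDensity, div_lt_iff₀ (by positivity)]
  have he : (pairEdges G X Y : ℝ) = ∑ x ∈ X, ((Y.filter (fun y => G.Adj x y)).card : ℝ) := by
    rw [pairEdges_eq_sum]; push_cast; rfl
  rw [he]
  calc ∑ x ∈ X, ((Y.filter (fun y => G.Adj x y)).card : ℝ)
      < ∑ _x ∈ X, c * Y.card := Finset.sum_lt_sum_of_nonempty hX h
    _ = c * (X.card * Y.card) := by rw [Finset.sum_const, nsmul_eq_mul]; ring

/-- Common neighbourhood lemma. -/
lemma common_nbhd {V : Type*} (G : SimpleGraph V) (A B : Finset V) (ε δ : ℝ) (m : ℕ)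
    (hε : 0 < ε) (hδ0 : 0 ≤ δ) (hδ1 : δ ≤ 1)
    (hδd : δ + ε ≤ pairDensity G A B)
    (hreg : IsRegularPair G A B ε)
    (A' B' : Finset V) (hA' : A' ⊆ A) (hB' : B' ⊆ B)
    (hBbig : ε * B.card < δ ^ m * B'.card) :
    ∀ j, j ≤ m → ((j : ℝ) + ε * A.card ≤ A'.card) →
    ∃ S, S ⊆ A' ∧ ∃ T, T ⊆ B' ∧ S.card = j ∧ (δ ^ j * B'.card ≤ (T.card : ℝ)) ∧
      ∀ x ∈ S, ∀ y ∈ T, G.Adj x y := by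
  intro j
  induction j with
  | zero =>
    intro _ _
    exact ⟨∅, by simp, B', le_refl _, by simp, by simp, by simp⟩
  | succ j ih =>
    intro hjm hA'card
    obtain ⟨S, hS, T, hT, hScard, hTcard, hadj⟩ := ih (Nat.le_of_succ_le hjm)
      (le_trans (by push_cast; linarith) hA'card)
    -- T is big
    have hTbig : ε * B.card < (T.card : ℝ) := by
      refine lt_of_lt_of_le hBbig (le_trans ?_ hTcard)
      exact mul_le_mul_of_nonneg_right
        (pow_le_pow_of_le_one hδ0 hδ1 (Nat.le_of_succ_le hjm)) (by positivity)
    have hTne : T.Nonempty := by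
      rw [← Finset.card_pos]
      have : (0:ℝ) < T.card := lt_of_le_of_lt (by positivity) hTbig
      exact_mod_cast this
    -- bad set
    set bad := A.filter (fun v => ((T.filter (fun y => G.Adj v y)).card : ℝ) < δ * T.card) with hbaddef
    have hbad : (bad.card : ℝ) ≤ ε * A.card := by
      by_contra hcon
      push_neg at hcon
      have hbadne : bad.Nonempty := by
        rw [← Finset.card_pos]
        have : (0:ℝ) < bad.card := lt_of_le_of_lt (by positivity) hcon
        exact_mod_cast this
      have hregres := hreg bad (Finset.filter_subset _ _) T (hT.trans hB') hcon hTbig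
      have hlt : pairDensity G bad T < δ := by
        refine pairDensity_lt_of_deg_lt G bad T δ hbadne hTne ?_
        intro x hx
        exact (Finset.mem_filter.mp hx).2
      have := abs_lt.mp hregres
      linarith
    -- pick a vertex
    have hcard : (S ∪ bad).card < A'.card := by
      have h1 : ((S ∪ bad).card : ℝ) ≤ (S.card : ℝ) + bad.card := by
        exact_mod_cast Finset.card_union_le _ _
      have : ((S ∪ bad).card : ℝ) < A'.card := by
        rw [hScard] at h1
        push_cast at hA'card ⊢
        linarith
      exact_mod_cast this
    obtain ⟨v, hvA', hvn⟩ := Finset.not_subset.mp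
      (fun h => absurd (Finset.card_le_card h) (not_le.mpr hcard))
    rw [Finset.mem_union] at hvn
    push_neg at hvn
    obtain ⟨hvS, hvbad⟩ := hvn
    have hvdeg : δ * T.card ≤ ((T.filter (fun y => G.Adj v y)).card : ℝ) := by
      by_contra hcon
      push_neg at hcon
      exact hvbad (Finset.mem_filter.mpr ⟨hA' hvA', hcon⟩)
    refine ⟨insert v S, Finset.insert_subset hvA' hS,
      T.filter (fun y => G.Adj v y), (Finset.filter_subset _ _).trans hT, ?_, ?_, ?_⟩
    · rw [Finset.card_insert_of_notMem hvS, hScard]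
    · calc δ ^ (j+1) * B'.card = δ * (δ ^ j * B'.card) := by ring
        _ ≤ δ * T.card := mul_le_mul_of_nonneg_left hTcard hδ0
        _ ≤ _ := hvdeg
    · intro x hx y hy
      rcases Finset.mem_insert.mp hx with rfl | hxS
      · exact (Finset.mem_filter.mp hy).2
      · exact hadj x hxS y ((Finset.filter_subset _ _) hy)


def TilingIn {VH V : Type*} (H : SimpleGraph VH) (G : SimpleGraph V)
    (A' B' : Finset V) (k : ℕ) : Prop :=
  ∃ f : Fin k → VH → V,
    (∀ i, Function.Injective (f i)) ∧
    (∀ i u v, H.Adj u v → G.Adj (f i u) (f i v) ∧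
      ((f i u ∈ A' ∧ f i v ∈ B') ∨ (f i u ∈ B' ∧ f i v ∈ A'))) ∧
    (∀ i u, f i u ∈ A' ∪ B') ∧
    (∀ i j, i ≠ j → ∀ u v, f i u ≠ f j v)

lemma TilingIn.zero {VH V : Type*} (H : SimpleGraph VH) (G : SimpleGraph V)
    (A' B' : Finset V) : TilingIn H G A' B' 0 :=
  ⟨fun i => absurd i.2 (by simp), fun i => i.elim0, fun i => i.elim0,
   fun i => i.elim0, fun i => i.elim0⟩

lemma TilingIn.mono {VH V : Type*} {H : SimpleGraph VH} {G : SimpleGraph V}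
    {A' B' A'' B'' : Finset V} {k : ℕ} (h : TilingIn H G A' B' k)
    (hA : A' ⊆ A'') (hB : B' ⊆ B'') : TilingIn H G A'' B'' k := by
  obtain ⟨f, h1, h2, h3, h4⟩ := h
  refine ⟨f, h1, fun i u v huv => ?_, fun i u => ?_, h4⟩
  · obtain ⟨hadj, hside⟩ := h2 i u v huv
    exact ⟨hadj, hside.elim (fun h => Or.inl ⟨hA h.1, hB h.2⟩) (fun h => Or.inr ⟨hB h.1, hA h.2⟩)⟩
  · rcases Finset.mem_union.mp (h3 i u) with h | h
    · exact Finset.mem_union.mpr (Or.inl (hA h))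
    · exact Finset.mem_union.mpr (Or.inr (hB h))

/-- Add one more copy, embedded in `S ∪ T`, to a tiling avoiding `S` and `T`. -/
lemma TilingIn.cons {VH V : Type*} {H : SimpleGraph VH} {G : SimpleGraph V}
    {A' B' S T : Finset V} {k : ℕ}
    (hS : S ⊆ A') (hT : T ⊆ B') (hdisj : ∀ x ∈ A', x ∉ B')
    (g : VH → V) (hginj : Function.Injective g)
    (hgadj : ∀ u v, H.Adj u v → G.Adj (g u) (g v) ∧
      ((g u ∈ S ∧ g v ∈ T) ∨ (g u ∈ T ∧ g v ∈ S)))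
    (hgmem : ∀ u, g u ∈ S ∪ T)
    (h : TilingIn H G (A' \ S) (B' \ T) k) : TilingIn H G A' B' (k + 1) := by
  obtain ⟨f, h1, h2, h3, h4⟩ := h
  have key : ∀ x, x ∈ S ∪ T → x ∈ (A' \ S) ∪ (B' \ T) → False := by
    intro x hx hx'
    rcases Finset.mem_union.mp hx with h | h <;> rcases Finset.mem_union.mp hx' with h' | h'
    · exact (Finset.mem_sdiff.mp h').2 h
    · exact hdisj x (hS h) (Finset.mem_sdiff.mp h').1
    · exact hdisj x (Finset.mem_sdiff.mp h').1 (hT h)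
    · exact (Finset.mem_sdiff.mp h').2 h
  refine ⟨Fin.cases g f, ?_, ?_, ?_, ?_⟩
  · intro i
    induction i using Fin.cases with
    | zero => simpa using hginj
    | succ i => simpa using h1 i
  · intro i u v huv
    induction i using Fin.cases with
    | zero =>
      obtain ⟨hadj, hside⟩ := hgadj u v huv
      refine ⟨by simpa using hadj, ?_⟩
      simp only [Fin.cases_zero]
      exact hside.elim (fun h => Or.inl ⟨hS h.1, hT h.2⟩) (fun h => Or.inr ⟨hT h.1, hS h.2⟩)
    | succ i =>
      obtain ⟨hadj, hside⟩ := h2 i u v huv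
      refine ⟨by simpa using hadj, ?_⟩
      simp only [Fin.cases_succ]
      refine hside.elim (fun h => Or.inl ⟨?_, ?_⟩) (fun h => Or.inr ⟨?_, ?_⟩)
      · exact (Finset.mem_sdiff.mp h.1).1
      · exact (Finset.mem_sdiff.mp h.2).1
      · exact (Finset.mem_sdiff.mp h.1).1
      · exact (Finset.mem_sdiff.mp h.2).1
  · intro i u
    induction i using Fin.cases with
    | zero =>
      simp only [Fin.cases_zero]
      rcases Finset.mem_union.mp (hgmem u) with h | h
      · exact Finset.mem_union.mpr (Or.inl (hS h))
      · exact Finset.mem_union.mpr (Or.inr (hT h))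
    | succ i =>
      simp only [Fin.cases_succ]
      rcases Finset.mem_union.mp (h3 i u) with h | h
      · exact Finset.mem_union.mpr (Or.inl (Finset.mem_sdiff.mp h).1)
      · exact Finset.mem_union.mpr (Or.inr (Finset.mem_sdiff.mp h).1)
  · intro i j hij u v
    induction i using Fin.cases with
    | zero =>
      induction j using Fin.cases with
      | zero => exact absurd rfl hij
      | succ j =>
        simp only [Fin.cases_zero, Fin.cases_succ]
        intro heq
        exact key _ (hgmem u) (heq ▸ h3 j v)
    | succ i =>
      induction j using Fin.cases with
      | zero =>
        simp only [Fin.cases_zero, Fin.cases_succ]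
        intro heq
        exact key _ (hgmem v) (heq ▸ h3 i u)
      | succ j =>
        simp only [Fin.cases_succ]
        exact h4 i j (fun h => hij (by rw [h])) u v


lemma card_le_sum_map {α : Type*} (cs : Multiset α) (f : α → ℕ)
    (h : ∀ c ∈ cs, 1 ≤ f c) : Multiset.card cs ≤ (cs.map f).sum := by
  induction cs using Multiset.induction_on with
  | empty => simp
  | cons a s ih =>
    simp only [Multiset.map_cons, Multiset.sum_cons, Multiset.card_cons]
    have h1 := h a (Multiset.mem_cons_self a s)
    have h2 := ih (fun c hc => h c (Multiset.mem_cons_of_mem hc))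
    omega


lemma card_filter_isLeft (a b : ℕ) :
    ((Finset.univ : Finset (Fin a ⊕ Fin b)).filter (fun x => x.isLeft = true)).card = a := by
  have h : ((Finset.univ : Finset (Fin a ⊕ Fin b)).filter (fun x => x.isLeft = true))
      = Finset.univ.image Sum.inl := by
    ext x
    cases x <;> simp
  rw [h, Finset.card_image_of_injective _ Sum.inl_injective, Finset.card_univ,
    Fintype.card_fin]

lemma card_filter_isRight (a b : ℕ) :
    ((Finset.univ : Finset (Fin a ⊕ Fin b)).filter (fun x => x.isRight = true)).card = b := by
  have h : ((Finset.univ : Finset (Fin a ⊕ Fin b)).filter (fun x => x.isRight = true))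
      = Finset.univ.image Sum.inr := by
    ext x
    cases x <;> simp
  rw [h, Finset.card_image_of_injective _ Sum.inr_injective, Finset.card_univ,
    Fintype.card_fin]

lemma sum_card_filter_le {k : ℕ} {VH : Type*} [Fintype VH] {W : Type*} [Fintype W]
    (f : Fin k → VH → W) (p : W → Bool)
    (hψ : Function.Injective (fun q : Fin k × VH => f q.1 q.2)) :
    ∑ i : Fin k, ((Finset.univ : Finset VH).filter (fun u => p (f i u) = true)).card ≤
      ((Finset.univ : Finset W).filter (fun x => p x = true)).card := by
  set P := (Finset.univ : Finset (Fin k × VH)).filter (fun q => p (f q.1 q.2) = true) with hP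
  have h1 : P.card = ∑ i : Fin k, (P.filter (fun q => q.1 = i)).card :=
    Finset.card_eq_sum_card_fiberwise (fun q _ => Finset.mem_univ q.1)
  have h2 : ∀ i : Fin k, (P.filter (fun q => q.1 = i)).card
      = ((Finset.univ : Finset VH).filter (fun u => p (f i u) = true)).card := by
    intro i
    refine Finset.card_bij (fun q _ => q.2) ?_ ?_ ?_
    · rintro ⟨q1, q2⟩ hq
      simp only [hP, Finset.mem_filter, Finset.mem_univ, true_and] at hq
      obtain ⟨h, rfl⟩ := hq
      simp [h]
    · rintro ⟨q1, q2⟩ hq ⟨r1, r2⟩ hr h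
      simp only [hP, Finset.mem_filter] at hq hr
      simp_all
    · intro u hu
      simp only [Finset.mem_filter, Finset.mem_univ, true_and] at hu
      exact ⟨(i, u), by simp [hP, hu], rfl⟩
  have h3 : P.card ≤ ((Finset.univ : Finset W).filter (fun x => p x = true)).card := by
    rw [← Finset.card_image_of_injOn (Function.Injective.injOn hψ)]
    apply Finset.card_le_card
    intro w hw
    simp only [Finset.mem_image] at hw
    obtain ⟨q, hq, rfl⟩ := hw
    simp only [hP, Finset.mem_filter, Finset.mem_univ, true_and] at hq ⊢
    exact hq
  calc ∑ i : Fin k, ((Finset.univ : Finset VH).filter (fun u => p (f i u) = true)).card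
      = ∑ i : Fin k, (P.filter (fun q => q.1 = i)).card := by
        exact Finset.sum_congr rfl (fun i _ => (h2 i).symm)
    _ = P.card := h1.symm
    _ ≤ _ := h3


lemma main_ind {VH V : Type*} [Fintype VH] (H : SimpleGraph VH) (G : SimpleGraph V)
    (A B : Finset V) (ε δ Θ : ℝ)
    (hε : 0 < ε) (hδ0 : 0 < δ) (hδ1 : δ ≤ 1)
    (hδd : δ + ε ≤ pairDensity G A B)
    (hreg : IsRegularPair G A B ε)
    (hAB : Disjoint A B)
    (hΘ0 : 0 ≤ Θ)
    (hΘ1 : (Fintype.card VH : ℝ) + ε * A.card ≤ Θ)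
    (hΘ2 : (ε * B.card + Fintype.card VH) / δ ^ (Fintype.card VH) ≤ Θ) :
    ∀ n (cs : Multiset (Finset VH)), Multiset.card cs = n →
      (∀ c ∈ cs, ∀ u v : VH, H.Adj u v → (u ∈ c ↔ v ∉ c)) →
      ∀ A' B' : Finset V, A' ⊆ A → B' ⊆ B →
      ((cs.map Finset.card).sum ≤ A'.card) →
      ((cs.map (fun c => cᶜ.card)).sum ≤ B'.card) →
      ∃ k' : ℕ, TilingIn H G A' B' k' ∧ (n : ℝ) ≤ (k' : ℝ) + Θ := by
  set m := Fintype.card VH with hm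
  intro n
  induction n with
  | zero =>
    intro cs _ _ A' B' _ _ _ _
    exact ⟨0, TilingIn.zero H G A' B', by simpa using hΘ0⟩
  | succ n ih =>
    intro cs hcs hprop A' B' hA' hB' hsumA hsumB
    have hdisj : ∀ x ∈ A', x ∉ B' :=
      fun x hx hx' => (Finset.disjoint_left.mp hAB (hA' hx)) (hB' hx')
    have hδm : (0:ℝ) < δ ^ m := pow_pos hδ0 m
    by_cases hone : ∃ c ∈ cs, c = ∅ ∨ cᶜ = ∅
    · obtain ⟨c, hc, hcase⟩ := hone
      have hc' : c ::ₘ cs.erase c = cs := Multiset.cons_erase hc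
      rw [← hc', Multiset.map_cons, Multiset.sum_cons] at hsumA hsumB
      have hcs' : Multiset.card (cs.erase c) = n := by
        rw [← hc', Multiset.card_cons] at hcs; omega
      have hprop' : ∀ c' ∈ cs.erase c, ∀ u v : VH, H.Adj u v → (u ∈ c' ↔ v ∉ c') :=
        fun c' hc'' => hprop c' (Multiset.mem_of_mem_erase hc'')
      rcases hcase with hcase | hcase
      · -- c = ∅ : copy lives entirely in B'
        have hnoadj : ∀ u v : VH, ¬ H.Adj u v := by
          intro u v huv
          have := hprop c hc u v huv
          simp [hcase] at this
        have hccard : c.card = 0 := by simp [hcase]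
        have hcompl : cᶜ.card = m := by simp [hcase, hm]
        rw [hcompl] at hsumB
        rw [hccard] at hsumA
        have hTm : m ≤ B'.card := le_trans (Nat.le_add_right _ _) hsumB
        obtain ⟨T, hT, hTcard⟩ := Finset.exists_subset_card_eq hTm
        have eVH : VH ≃ Fin m := Fintype.equivFinOfCardEq rfl
        have eT : Fin m ≃ {x // x ∈ T} := (T.equivFinOfCardEq hTcard).symm
        set g : VH → V := fun u => (eT (eVH u) : V) with hg
        have hgmemT : ∀ u, g u ∈ T := fun u => (eT (eVH u)).2
        have hginj : Function.Injective g := by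
          intro u v huv
          have : eT (eVH u) = eT (eVH v) := Subtype.ext huv
          exact eVH.injective (eT.injective this)
        obtain ⟨k'', htil, hbound⟩ := ih (cs.erase c) hcs' hprop' A' (B' \ T) hA'
          ((Finset.sdiff_subset).trans hB') (by simpa using hsumA)
          (by rw [Finset.card_sdiff_of_subset hT, hTcard]; omega)
        refine ⟨k'' + 1, ?_, ?_⟩
        · refine TilingIn.cons (Finset.empty_subset A') hT hdisj g hginj
            (fun u v huv => absurd huv (hnoadj u v))
            (fun u => Finset.mem_union.mpr (Or.inr (hgmemT u))) ?_
          simpa using htil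
        · push_cast at hbound ⊢; linarith
      · -- cᶜ = ∅ : copy lives entirely in A'
        have hcuniv : c = Finset.univ := by
          rwa [Finset.compl_eq_empty_iff] at hcase
        have hnoadj : ∀ u v : VH, ¬ H.Adj u v := by
          intro u v huv
          have := hprop c hc u v huv
          simp [hcuniv] at this
        have hccard : c.card = m := by simp [hcuniv, hm]
        have hcompl : cᶜ.card = 0 := by simp [hcase]
        rw [hcompl] at hsumB
        rw [hccard] at hsumA
        have hSm : m ≤ A'.card := le_trans (Nat.le_add_right _ _) hsumA
        obtain ⟨S, hS, hScard⟩ := Finset.exists_subset_card_eq hSm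
        have eVH : VH ≃ Fin m := Fintype.equivFinOfCardEq rfl
        have eS : Fin m ≃ {x // x ∈ S} := (S.equivFinOfCardEq hScard).symm
        set g : VH → V := fun u => (eS (eVH u) : V) with hg
        have hgmemS : ∀ u, g u ∈ S := fun u => (eS (eVH u)).2
        have hginj : Function.Injective g := by
          intro u v huv
          have : eS (eVH u) = eS (eVH v) := Subtype.ext huv
          exact eVH.injective (eS.injective this)
        obtain ⟨k'', htil, hbound⟩ := ih (cs.erase c) hcs' hprop'
          (A' \ S) B' ((Finset.sdiff_subset).trans hA') hB'
          (by rw [Finset.card_sdiff_of_subset hS, hScard]; omega) (by simpa using hsumB)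
        refine ⟨k'' + 1, ?_, ?_⟩
        · refine TilingIn.cons hS (Finset.empty_subset B') hdisj g hginj
            (fun u v huv => absurd huv (hnoadj u v))
            (fun u => Finset.mem_union.mpr (Or.inl (hgmemS u))) ?_
          simpa using htil
        · push_cast at hbound ⊢; linarith
    · push_neg at hone
      by_cases hsucc : ((m:ℝ) + ε * A.card ≤ A'.card) ∧ ε * B.card < δ ^ m * B'.card ∧
          ((m:ℝ) ≤ δ ^ m * B'.card)
      · -- successful embedding of a mixed copy
        obtain ⟨hP, hQ, hR⟩ := hsucc
        have hne : cs ≠ 0 := by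
          intro h; rw [h] at hcs; simp at hcs
        obtain ⟨c, hc⟩ := Multiset.exists_mem_of_ne_zero hne
        have hc' : c ::ₘ cs.erase c = cs := Multiset.cons_erase hc
        rw [← hc', Multiset.map_cons, Multiset.sum_cons] at hsumA hsumB
        have hcs' : Multiset.card (cs.erase c) = n := by
          rw [← hc', Multiset.card_cons] at hcs; omega
        have hprop' : ∀ c' ∈ cs.erase c, ∀ u v : VH, H.Adj u v → (u ∈ c' ↔ v ∉ c') :=
          fun c' hc'' => hprop c' (Multiset.mem_of_mem_erase hc'')
        have hsm : c.card ≤ m := by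
          rw [hm]; exact Finset.card_le_univ c
        obtain ⟨S, hS, Ts, hTs, hScard, hTscard, hadj⟩ :=
          common_nbhd G A B ε δ m hε (le_of_lt hδ0) hδ1 hδd hreg A' B' hA' hB' hQ
            c.card hsm (by
              refine le_trans ?_ hP
              have : (c.card : ℝ) ≤ m := by exact_mod_cast hsm
              linarith)
        have hts : (cᶜ.card : ℕ) ≤ Ts.card := by
          have h1 : ((cᶜ.card : ℕ) : ℝ) ≤ m := by
            exact_mod_cast (by rw [hm]; exact Finset.card_le_univ _ : cᶜ.card ≤ m)
          have h2 : δ ^ m * B'.card ≤ δ ^ c.card * B'.card :=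
            mul_le_mul_of_nonneg_right (pow_le_pow_of_le_one (le_of_lt hδ0) hδ1 hsm)
              (by positivity)
          have : ((cᶜ.card : ℕ) : ℝ) ≤ Ts.card := by linarith
          exact_mod_cast this
        obtain ⟨T, hTsub, hTcard⟩ := Finset.exists_subset_card_eq hts
        have hTB' : T ⊆ B' := hTsub.trans hTs
        -- build the embedding
        have φ : {x // x ∈ c} ≃ {x // x ∈ S} := Finset.equivOfCardEq (by rw [hScard])
        have ψ : {x // x ∈ cᶜ} ≃ {x // x ∈ T} := Finset.equivOfCardEq (by rw [hTcard])
        set g : VH → V := fun u =>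
          if h : u ∈ c then (φ ⟨u, h⟩ : V) else (ψ ⟨u, Finset.mem_compl.mpr h⟩ : V) with hg
        have hgS : ∀ u (h : u ∈ c), g u ∈ S := by
          intro u h; simp only [hg, dif_pos h]; exact (φ ⟨u, h⟩).2
        have hgT : ∀ u (h : u ∉ c), g u ∈ T := by
          intro u h; simp only [hg, dif_neg h]; exact (ψ ⟨u, Finset.mem_compl.mpr h⟩).2
        have hST : ∀ x, x ∈ S → x ∈ T → False := fun x hx hx' =>
          hdisj x (hS hx) (hTB' hx')
        have hginj : Function.Injective g := by
          intro u v huv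
          by_cases hu : u ∈ c <;> by_cases hv : v ∈ c
          · have : φ ⟨u, hu⟩ = φ ⟨v, hv⟩ := by
              apply Subtype.ext; simpa [hg, dif_pos hu, dif_pos hv] using huv
            exact Subtype.mk_eq_mk.mp (φ.injective this)
          · exact (hST (g v) (huv ▸ hgS u hu) (hgT v hv)).elim
          · exact (hST (g u) (huv.symm ▸ hgS v hv) (hgT u hu)).elim
          · have : ψ ⟨u, Finset.mem_compl.mpr hu⟩ = ψ ⟨v, Finset.mem_compl.mpr hv⟩ := by
              apply Subtype.ext; simpa [hg, dif_neg hu, dif_neg hv] using huv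
            exact Subtype.mk_eq_mk.mp (ψ.injective this)
        have hgadj : ∀ u v, H.Adj u v → G.Adj (g u) (g v) ∧
            ((g u ∈ S ∧ g v ∈ T) ∨ (g u ∈ T ∧ g v ∈ S)) := by
          intro u v huv
          have hp := hprop c hc u v huv
          by_cases hu : u ∈ c
          · have hv : v ∉ c := hp.mp hu
            have h1 : g u ∈ S := hgS u hu
            have h2 : g v ∈ T := hgT v hv
            exact ⟨hadj _ h1 _ (hTsub h2), Or.inl ⟨h1, h2⟩⟩
          · have hv : v ∈ c := by
              by_contra hv
              exact hu (hp.mpr hv)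
            have h1 : g v ∈ S := hgS v hv
            have h2 : g u ∈ T := hgT u hu
            exact ⟨(hadj _ h1 _ (hTsub h2)).symm, Or.inr ⟨h2, h1⟩⟩
        obtain ⟨k'', htil, hbound⟩ := ih (cs.erase c) hcs' hprop'
          (A' \ S) (B' \ T) ((Finset.sdiff_subset).trans hA') ((Finset.sdiff_subset).trans hB')
          (by rw [Finset.card_sdiff_of_subset hS, hScard]; omega)
          (by rw [Finset.card_sdiff_of_subset hTB', hTcard]; omega)
        refine ⟨k'' + 1, ?_, ?_⟩
        · exact TilingIn.cons hS hTB' hdisj g hginj hgadj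
            (fun u => by
              by_cases hu : u ∈ c
              · exact Finset.mem_union.mpr (Or.inl (hgS u hu))
              · exact Finset.mem_union.mpr (Or.inr (hgT u hu))) htil
        · push_cast at hbound ⊢; linarith
      · -- failure: there are few copies left
        refine ⟨0, TilingIn.zero H G A' B', ?_⟩
        have hc1 : ∀ c ∈ cs, 1 ≤ c.card := by
          intro c hc
          exact Finset.card_pos.mpr (by simpa [Finset.nonempty_iff_ne_empty] using (hone c hc).1)
        have hc2 : ∀ c ∈ cs, 1 ≤ cᶜ.card := by
          intro c hc
          exact Finset.card_pos.mpr (by simpa [Finset.nonempty_iff_ne_empty] using (hone c hc).2)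
        have hlenA : (n + 1 : ℕ) ≤ A'.card :=
          le_trans (hcs ▸ card_le_sum_map cs Finset.card hc1) hsumA
        have hlenB : (n + 1 : ℕ) ≤ B'.card :=
          le_trans (hcs ▸ card_le_sum_map cs (fun c => cᶜ.card) hc2) hsumB
        have hlenAR : ((n:ℝ) + 1) ≤ A'.card := by exact_mod_cast hlenA
        have hlenBR : ((n:ℝ) + 1) ≤ B'.card := by exact_mod_cast hlenB
        rw [not_and_or, not_and_or] at hsucc
        have hεB : (0:ℝ) ≤ ε * B.card := by positivity
        have hmR : (0:ℝ) ≤ (m:ℝ) := by positivity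
        rcases hsucc with h | h | h
        · push_neg at h
          have hA'A : (A'.card : ℝ) ≤ A.card := by
            exact_mod_cast Finset.card_le_card hA'
          -- n+1 ≤ A'.card < m + ε A.card ≤ Θ
          simp only [Nat.cast_succ]
          linarith
        · push_neg at h
          -- δ^m B'.card ≤ ε B.card
          have : (B'.card : ℝ) ≤ (ε * B.card + m) / δ ^ m := by
            rw [le_div_iff₀ hδm]
            linarith
          simp only [Nat.cast_succ]
          linarith
        · push_neg at h
          have : (B'.card : ℝ) ≤ (ε * B.card + m) / δ ^ m := by
            rw [le_div_iff₀ hδm]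
            linarith
          simp only [Nat.cast_succ]
          linarith


/-- Extract side-patterns from a tiling of a complete bipartite graph. -/
lemma tiling_patterns {VH : Type*} [Fintype VH] (H : SimpleGraph VH) (a b k : ℕ)
    (hK : HasTiling H (completeBipartiteGraph (Fin a) (Fin b)) k) :
    ∃ cs : Multiset (Finset VH), Multiset.card cs = k ∧
      (∀ c ∈ cs, ∀ u v : VH, H.Adj u v → (u ∈ c ↔ v ∉ c)) ∧
      (cs.map Finset.card).sum ≤ a ∧ (cs.map (fun c => cᶜ.card)).sum ≤ b := by
  obtain ⟨f, hfinj, hfadj, hfcross⟩ := hK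
  have hψ : Function.Injective (fun q : Fin k × VH => f q.1 q.2) := by
    rintro ⟨i, u⟩ ⟨j, v⟩ h
    simp only at h
    by_cases hij : i = j
    · subst hij
      rw [hfinj i h]
    · exact absurd h (hfcross i j hij u v)
  refine ⟨Multiset.map (fun i => (Finset.univ : Finset VH).filter
    (fun u => (f i u).isLeft = true)) Finset.univ.val, by simp, ?_, ?_, ?_⟩
  · intro c hc u v huv
    rw [Multiset.mem_map] at hc
    obtain ⟨i, _, rfl⟩ := hc
    have hadj := hfadj i u v huv
    simp only [Finset.mem_filter, Finset.mem_univ, true_and]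
    rcases hu' : f i u with x | x <;> rcases hv' : f i v with y | y <;>
      rw [hu', hv'] at hadj <;> simp_all
  · rw [Multiset.map_map]
    have h1 : (Multiset.map (Finset.card ∘ fun i => (Finset.univ : Finset VH).filter
        (fun u => (f i u).isLeft = true)) Finset.univ.val).sum
        = ∑ i : Fin k, ((Finset.univ : Finset VH).filter
          (fun u => (f i u).isLeft = true)).card := rfl
    rw [h1]
    exact le_trans (sum_card_filter_le f Sum.isLeft hψ) (le_of_eq (card_filter_isLeft a b))
  · rw [Multiset.map_map]
    have h1 : (Multiset.map ((fun c => Finset.card cᶜ) ∘ fun i => (Finset.univ : Finset VH).filter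
        (fun u => (f i u).isLeft = true)) Finset.univ.val).sum
        = ∑ i : Fin k, (((Finset.univ : Finset VH).filter
          (fun u => (f i u).isLeft = true))ᶜ).card := rfl
    rw [h1]
    have h3 : ∀ i : Fin k, (((Finset.univ : Finset VH).filter
        (fun u => (f i u).isLeft = true))ᶜ)
        = (Finset.univ : Finset VH).filter (fun u => (f i u).isRight = true) := by
      intro i
      ext u
      simp only [Finset.mem_compl, Finset.mem_filter, Finset.mem_univ, true_and]
      cases hfu : f i u <;> simp [hfu]
    calc ∑ i : Fin k, (((Finset.univ : Finset VH).filter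
          (fun u => (f i u).isLeft = true))ᶜ).card
        = ∑ i : Fin k, ((Finset.univ : Finset VH).filter
          (fun u => (f i u).isRight = true)).card :=
          Finset.sum_congr rfl (fun i _ => by rw [h3 i])
      _ ≤ _ := le_trans (sum_card_filter_le f Sum.isRight hψ)
          (le_of_eq (card_filter_isRight a b))

/-- If all pairs between `A` and `B` are adjacent, tilings of `K_{|A|,|B|}` transfer. -/
lemma transfer_complete {VH V : Type*} [Fintype VH] (H : SimpleGraph VH) (G : SimpleGraph V)
    (A B : Finset V) (hdisj : Disjoint A B)
    (hcomp : ∀ x ∈ A, ∀ y ∈ B, G.Adj x y) (k : ℕ)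
    (hK : HasTiling H (completeBipartiteGraph (Fin A.card) (Fin B.card)) k) :
    HasTiling H (betweenPair G A B) k := by
  obtain ⟨f, hfinj, hfadj, hfcross⟩ := hK
  have eA := A.equivFinOfCardEq rfl
  have eB := B.equivFinOfCardEq rfl
  set φ : Fin (A.card) ⊕ Fin (B.card) → V :=
    Sum.elim (fun i => (eA.symm i : V)) (fun j => (eB.symm j : V)) with hφdef
  have hφA : ∀ i, φ (Sum.inl i) ∈ A := fun i => (eA.symm i).2
  have hφB : ∀ j, φ (Sum.inr j) ∈ B := fun j => (eB.symm j).2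
  have hφinj : Function.Injective φ := by
    rintro (p | p) (q | q) h
    · simp only [hφdef, Sum.elim_inl] at h
      rw [eA.symm.injective (Subtype.coe_injective h)]
    · exact ((Finset.disjoint_left.mp hdisj (hφA p)) (h ▸ hφB q)).elim
    · exact ((Finset.disjoint_left.mp hdisj (hφA q)) (h ▸ hφB p)).elim
    · simp only [hφdef, Sum.elim_inr] at h
      rw [eB.symm.injective (Subtype.coe_injective h)]
  refine ⟨fun i u => φ (f i u), fun i => hφinj.comp (hfinj i), ?_, ?_⟩
  · intro i u v huv
    have hadj := hfadj i u v huv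
    rcases hu' : f i u with x | x <;> rcases hv' : f i v with y | y <;>
      rw [hu', hv'] at hadj <;> simp only [completeBipartiteGraph] at hadj <;>
      simp_all
    · exact ⟨hcomp _ (eA.symm x).2 _ (eB.symm y).2, Or.inl ⟨(eA.symm x).2, (eB.symm y).2⟩⟩
    · exact ⟨(hcomp _ (eA.symm y).2 _ (eB.symm x).2).symm, Or.inr ⟨(eB.symm x).2, (eA.symm y).2⟩⟩
  · intro i j hij u v h
    exact hfcross i j hij u v (hφinj h)

/-- In a very regular dense pair, every cross pair is adjacent. -/
lemma complete_of_regular {V : Type*} (G : SimpleGraph V) (A B : Finset V) (ε d' : ℝ)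
    (hε0 : 0 < ε) (hd' : 0 < d') (hεd : ε < d')
    (hreg : IsRegularPair G A B ε) (hdens : d' ≤ pairDensity G A B)
    (hA : ε * (A.card:ℝ) < 1) (hB : ε * (B.card:ℝ) < 1) :
    ∀ x ∈ A, ∀ y ∈ B, G.Adj x y := by
  intro x hx y hy
  by_contra hne
  have hx1 : ε * (A.card:ℝ) < (({x} : Finset V).card : ℝ) := by
    rw [Finset.card_singleton]; exact_mod_cast hA
  have hy1 : ε * (B.card:ℝ) < (({y} : Finset V).card : ℝ) := by
    rw [Finset.card_singleton]; exact_mod_cast hB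
  have hsing := hreg {x} (Finset.singleton_subset_iff.mpr hx) {y}
    (Finset.singleton_subset_iff.mpr hy) hx1 hy1
  have hzero : pairEdges G {x} {y} = 0 := by
    rw [pairEdges]
    convert Set.ncard_empty (V × V)
    ext p
    simp only [Set.mem_setOf_eq, Finset.mem_singleton, Set.mem_empty_iff_false, iff_false,
      not_and]
    rintro rfl rfl
    exact fun h => hne h
  have hpd0 : pairDensity G {x} {y} = 0 := by
    rw [pairDensity, hzero]
    simp
  rw [hpd0] at hsing
  have := abs_lt.mp hsing
  linarith


set_option maxHeartbeats 1000000 in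
/-- For every bipartite graph `H` and `γ, d > 0` there is an `ε > 0` such that:
if `K_{a,b}` contains an `H`-tiling of size `x` (i.e. of `k` copies with
`x = k·|V(H)|`) and `(A,B)` is an `ε`-regular pair of density at least `d`
with `|A| = a`, `|B| = b`, then the pair `(A,B)` contains an `H`-tiling of
size at least `x - γ(a+b)`. -/
theorem regular_pair_tiling {VH : Type*} [Fintype VH] (H : SimpleGraph VH)
    (hbip : ∃ b : VH → Bool, ∀ u v, H.Adj u v → b u ≠ b v)
    (γ d : ℝ) (hγ : 0 < γ) (hd : 0 < d) :
    ∃ ε : ℝ, 0 < ε ∧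
      ∀ a b k : ℕ,
        HasTiling H (completeBipartiteGraph (Fin a) (Fin b)) k →
        ∀ {V : Type} (G : SimpleGraph V) (A B : Finset V),
          Disjoint A B → A.card = a → B.card = b →
          IsRegularPair G A B ε → d ≤ pairDensity G A B →
          ∃ k' : ℕ, HasTiling H (betweenPair G A B) k' ∧
            (k : ℝ) * (Fintype.card VH : ℝ) - γ * ((a : ℝ) + (b : ℝ)) ≤
              (k' : ℝ) * (Fintype.card VH : ℝ) := by
  by_cases hm0 : Fintype.card VH = 0
  · -- VH is empty : trivial
    refine ⟨1, one_pos, ?_⟩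
    intro a b k _ V G A B _ _ _ _ _
    have hVH : IsEmpty VH := Fintype.card_eq_zero_iff.mp hm0
    refine ⟨k, ⟨fun _ u => hVH.elim u, fun i u => hVH.elim u,
      fun i u => hVH.elim u, fun i j _ u => hVH.elim u⟩, ?_⟩
    rw [hm0]
    push_cast
    have h1 : (0:ℝ) ≤ (a:ℝ) + b := by positivity
    nlinarith
  · set m := Fintype.card VH with hmdef
    have hm1 : 1 ≤ m := Nat.one_le_iff_ne_zero.mpr hm0
    have hmR : (1:ℝ) ≤ (m:ℝ) := by exact_mod_cast hm1
    have hmR0 : (0:ℝ) < (m:ℝ) := by linarith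
    obtain ⟨d', hd'0, hd'1, hd'd⟩ : ∃ d' : ℝ, 0 < d' ∧ d' ≤ 1 ∧ d' ≤ d :=
      ⟨min d 1, lt_min hd one_pos, min_le_right _ _, min_le_left _ _⟩
    obtain ⟨D, hD0, hD1, hDpow⟩ : ∃ D : ℝ, 0 < D ∧ D ≤ 1 ∧ D = (d'/2)^m :=
      ⟨(d'/2)^m, by positivity, pow_le_one₀ (by positivity) (by linarith), rfl⟩
    obtain ⟨N, hN0, hγN⟩ : ∃ N : ℝ, 0 < N ∧ γ * N = 2*(m:ℝ)^2*(1+1/D) :=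
      ⟨2*(m:ℝ)^2/γ*(1+1/D), by positivity, by field_simp⟩
    obtain ⟨ε, hε0, hε1, hε2, hε3, hε4⟩ :
        ∃ ε : ℝ, 0 < ε ∧ ε ≤ d'/2 ∧ ε ≤ γ/(2*m) ∧ ε ≤ γ*D/(2*m) ∧ ε ≤ 1/(N+1) :=
      ⟨min (min (d'/2) (γ/(2*m))) (min (γ*D/(2*m)) (1/(N+1))),
        lt_min (lt_min (by positivity) (by positivity))
          (lt_min (by positivity) (by positivity)),
        le_trans (min_le_left _ _) (min_le_left _ _),
        le_trans (min_le_left _ _) (min_le_right _ _),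
        le_trans (min_le_right _ _) (min_le_left _ _),
        le_trans (min_le_right _ _) (min_le_right _ _)⟩
    refine ⟨ε, hε0, ?_⟩
    intro a b k htil V G A B hdisj hAcard hBcard hreg hdens
    subst hAcard
    subst hBcard
    have hdens' : d' ≤ pairDensity G A B := le_trans hd'd hdens
    -- A and B are nonempty
    have hAne : (0:ℕ) < A.card := by
      by_contra h
      push_neg at h
      have h0 : A.card = 0 := by omega
      have : pairDensity G A B = 0 := by
        rw [pairDensity, h0]
        simp
      rw [this] at hdens'
      linarith
    have hBne : (0:ℕ) < B.card := by
      by_contra h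
      push_neg at h
      have h0 : B.card = 0 := by omega
      have : pairDensity G A B = 0 := by
        rw [pairDensity, h0]
        simp
      rw [this] at hdens'
      linarith
    have hAR : (0:ℝ) ≤ (A.card:ℝ) := Nat.cast_nonneg _
    have hBR : (0:ℝ) ≤ (B.card:ℝ) := Nat.cast_nonneg _
    by_cases hsmall : ((A.card:ℝ) + B.card) < N
    · -- small case: the pair is complete
      have hcomp : ∀ x ∈ A, ∀ y ∈ B, G.Adj x y := by
        refine complete_of_regular G A B ε d' hε0 hd'0 (by linarith) hreg hdens' ?_ ?_
        · calc ε * (A.card:ℝ) ≤ (1/(N+1)) * A.card :=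
              mul_le_mul_of_nonneg_right hε4 hAR
            _ < 1 := by
              rw [div_mul_eq_mul_div, div_lt_one (by linarith)]
              linarith
        · calc ε * (B.card:ℝ) ≤ (1/(N+1)) * B.card :=
              mul_le_mul_of_nonneg_right hε4 hBR
            _ < 1 := by
              rw [div_mul_eq_mul_div, div_lt_one (by linarith)]
              linarith
      refine ⟨k, transfer_complete H G A B hdisj hcomp k htil, ?_⟩
      have : (0:ℝ) ≤ γ * ((A.card:ℝ) + B.card) := by positivity
      linarith
    · -- large case
      push_neg at hsmall
      set δ : ℝ := d' - ε with hδdef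
      have hδ0 : 0 < δ := by
        simp only [hδdef]; linarith
      have hδhalf : d'/2 ≤ δ := by simp only [hδdef]; linarith
      have hδ1 : δ ≤ 1 := by simp only [hδdef]; linarith
      have hδd : δ + ε ≤ pairDensity G A B := by
        simp only [hδdef]; linarith
      have hδmD : D ≤ δ^m := by
        rw [hDpow]
        exact pow_le_pow_left₀ (by positivity) hδhalf m
      have hγab : 2*(m:ℝ)^2*(1+1/D) ≤ γ * ((A.card:ℝ) + B.card) := by
        rw [← hγN]
        exact mul_le_mul_of_nonneg_left hsmall (le_of_lt hγ)
      have hεm : ε * (m:ℝ) ≤ γ/2 := by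
        calc ε * (m:ℝ) ≤ (γ/(2*m)) * m := mul_le_mul_of_nonneg_right hε2 (by linarith)
          _ = γ/2 := by field_simp
      have hεmD : ε * (m:ℝ) ≤ γ*D/2 := by
        calc ε * (m:ℝ) ≤ (γ*D/(2*m)) * m := mul_le_mul_of_nonneg_right hε3 (by linarith)
          _ = γ*D/2 := by field_simp
      have hinvD : (1:ℝ) ≤ 1/D := by
        rw [le_div_iff₀ hD0]; linarith
      obtain ⟨Θ, hΘ0, hΘm⟩ : ∃ Θ : ℝ, 0 ≤ Θ ∧ Θ * m = γ * ((A.card:ℝ) + B.card) :=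
        ⟨γ * ((A.card:ℝ) + B.card) / m, by positivity, by field_simp⟩
      have hΘ1 : (m:ℝ) + ε * A.card ≤ Θ := by
        rw [← mul_le_mul_iff_of_pos_right hmR0, hΘm]
        have h1 : ε * (A.card:ℝ) * m ≤ (γ/2) * A.card := by
          calc ε * (A.card:ℝ) * m = (ε * m) * A.card := by ring
            _ ≤ (γ/2) * A.card := mul_le_mul_of_nonneg_right hεm hAR
        nlinarith
      have hΘ2 : (ε * B.card + (m:ℝ)) / δ^m ≤ Θ := by
        have hδm0 : (0:ℝ) < δ^m := by positivity
        have step1 : (ε * B.card + (m:ℝ)) / δ^m ≤ (ε * B.card + m) / D :=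
          div_le_div_of_nonneg_left (by positivity) hD0 hδmD
        refine le_trans step1 ?_
        rw [div_le_iff₀ hD0, ← mul_le_mul_iff_of_pos_right hmR0]
        have hΘm' : Θ * D * m = γ * ((A.card:ℝ) + B.card) * D := by
          rw [mul_right_comm, hΘm]
        have h1 : ε * (B.card:ℝ) * m ≤ (γ*D/2) * B.card := by
          calc ε * (B.card:ℝ) * m = (ε * m) * B.card := by ring
            _ ≤ (γ*D/2) * B.card := mul_le_mul_of_nonneg_right hεmD hBR
        have h2 : 2*(m:ℝ)^2*(1+1/D)*D = 2*m^2*(D+1) := by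
          field_simp
          try ring
        have h3 : 2*(m:ℝ)^2*(1+1/D)*D ≤ γ * ((A.card:ℝ) + B.card) * D :=
          mul_le_mul_of_nonneg_right hγab (le_of_lt hD0)
        have h5 : 2*(m:ℝ)^2*(D+1) ≤ γ * ((A.card:ℝ) + B.card) * D := h2 ▸ h3
        have h4 : 0 ≤ γ * (A.card:ℝ) * D := by positivity
        rw [hΘm']
        nlinarith [h1, h5, h4, mul_nonneg (sq_nonneg (m:ℝ)) hD0.le]
      -- apply the main induction
      obtain ⟨cs, hcscard, hcsprop, hcssumA, hcssumB⟩ :=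
        tiling_patterns H (A.card) (B.card) k htil
      obtain ⟨k', htil', hbound⟩ := main_ind H G A B ε δ Θ hε0 hδ0 hδ1 hδd hreg hdisj
        hΘ0 hΘ1 hΘ2 k cs hcscard hcsprop A B (le_refl _) (le_refl _) hcssumA hcssumB
      obtain ⟨g, hg1, hg2, hg3, hg4⟩ := htil'
      refine ⟨k', ⟨g, hg1, fun i u v huv => hg2 i u v huv, hg4⟩, ?_⟩
      -- the numeric bound
      have := mul_le_mul_of_nonneg_right hbound (le_of_lt hmR0)
      nlinarith
end

section
/- Let H be a graph, let H' be the graph obtained from H by removing all isolated vertices of H, and assume H' has at least one vertex. Let G be an n-vertex graph, let x be the number of vertices covered by a maximum-size H-tiling of G, and let x' be the number of vertices covered by a maximum-size H'-tiling of G. Then x = min{ |V(H)|·⌊n/|V(H)|⌋, x'·|V(H)|/|V(H')| }. -/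
lemma tiling_card_le {α β : Type*} [Fintype α] [Fintype β] {H : SimpleGraph α}
    {G : SimpleGraph β} {k : ℕ} (h : HasTiling H G k) :
    k * Fintype.card α ≤ Fintype.card β := by
  obtain ⟨f, hinj, -, hdisj⟩ := h
  have hF : Function.Injective (fun p : Fin k × α => f p.1 p.2) := by
    rintro ⟨i, u⟩ ⟨j, v⟩ h
    by_cases hij : i = j
    · subst hij; exact congrArg _ (hinj i h)
    · exact absurd h (hdisj i j hij u v)
  simpa [Fintype.card_prod] using Fintype.card_le_of_injective _ hF

lemma tiling_mono {α β : Type*} {H : SimpleGraph α} {G : SimpleGraph β} {k m : ℕ}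
    (hmk : m ≤ k) (h : HasTiling H G k) : HasTiling H G m := by
  obtain ⟨f, hinj, hadj, hdisj⟩ := h
  exact ⟨fun i => f (Fin.castLE hmk i), fun i => hinj _, fun i => hadj _,
    fun i j hij => hdisj _ _ (fun h => hij (Fin.castLE_injective hmk h))⟩

lemma tiling_induce {α β : Type*} {H : SimpleGraph α} {G : SimpleGraph β} {k : ℕ}
    (s : Set α) (h : HasTiling H G k) : HasTiling (SimpleGraph.induce s H) G k := by
  obtain ⟨f, hinj, hadj, hdisj⟩ := h
  exact ⟨fun i w => f i w.val, fun i a b hab => Subtype.ext (hinj i hab),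
    fun i u v huv => hadj i _ _ huv, fun i j hij u v => hdisj i j hij _ _⟩

lemma tiling_extend {α β : Type*} [Fintype α] [Fintype β] {H : SimpleGraph α}
    {G : SimpleGraph β} {m : ℕ} {s : Set α}
    (hs : ∀ u v, H.Adj u v → u ∈ s)
    (h : HasTiling (SimpleGraph.induce s H) G m)
    (hn : m * Fintype.card α ≤ Fintype.card β) : HasTiling H G m := by
  classical
  obtain ⟨f, hinj, hadj, hdisj⟩ := h
  set F : Fin m × s → β := fun p => f p.1 p.2 with hF
  have hFinj : Function.Injective F := by
    rintro ⟨i, u⟩ ⟨j, v⟩ h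
    by_cases hij : i = j
    · subst hij; exact congrArg _ (hinj i h)
    · exact absurd h (hdisj i j hij u v)
  set used : Finset β := Finset.univ.image F with hused
  have hcard_used : used.card = m * Fintype.card s := by
    rw [hused, Finset.card_image_of_injective _ hFinj, Finset.card_univ,
      Fintype.card_prod, Fintype.card_fin]
  have hcompl : Fintype.card (Fin m × (sᶜ : Set α)) ≤ Fintype.card {y // y ∈ usedᶜ} := by
    rw [Fintype.card_prod, Fintype.card_fin, Fintype.card_coe, Finset.card_compl,
      hcard_used, Fintype.card_compl_set]
    have h1 : Fintype.card s ≤ Fintype.card α := Fintype.card_le_of_injective _ Subtype.val_injective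
    have h2 := Nat.mul_le_mul_left m h1
    have h3 : m * (Fintype.card α - Fintype.card s) =
        m * Fintype.card α - m * Fintype.card s := Nat.mul_sub m _ _
    omega
  obtain ⟨g⟩ := Function.Embedding.nonempty_of_card_le hcompl
  set f2 : Fin m → α → β := fun i v =>
    if hv : v ∈ s then f i ⟨v, hv⟩ else (g (i, ⟨v, hv⟩)).val with hf2
  have hmemused : ∀ (i : Fin m) (w : s), f i w ∈ used := fun i w =>
    Finset.mem_image.2 ⟨(i, w), Finset.mem_univ _, rfl⟩
  have hmemc : ∀ (i : Fin m) (w : (sᶜ : Set α)), (g (i, w)).val ∉ used := fun i w =>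
    Finset.mem_compl.1 (g (i, w)).2
  refine ⟨f2, ?_, ?_, ?_⟩
  · intro i u v huv
    simp only [hf2] at huv
    by_cases hu : u ∈ s <;> by_cases hv : v ∈ s
    · rw [dif_pos hu, dif_pos hv] at huv
      exact congrArg Subtype.val (hinj i huv)
    · rw [dif_pos hu, dif_neg hv] at huv
      exact absurd (huv ▸ hmemused i ⟨u, hu⟩) (hmemc i ⟨v, hv⟩)
    · rw [dif_neg hu, dif_pos hv] at huv
      exact absurd (huv ▸ hmemused i ⟨v, hv⟩) (hmemc i ⟨u, hu⟩)
    · rw [dif_neg hu, dif_neg hv] at huv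
      have := g.injective (Subtype.ext huv)
      exact congrArg Subtype.val (congrArg Prod.snd this : (⟨u,hu⟩ : (sᶜ:Set α)) = ⟨v,hv⟩)
  · intro i u v huv
    have hu : u ∈ s := hs u v huv
    have hv : v ∈ s := hs v u huv.symm
    have : f2 i u = f i ⟨u, hu⟩ := dif_pos hu
    rw [this, show f2 i v = f i ⟨v, hv⟩ from dif_pos hv]
    exact hadj i ⟨u, hu⟩ ⟨v, hv⟩ huv
  · intro i j hij u v huv
    simp only [hf2] at huv
    by_cases hu : u ∈ s <;> by_cases hv : v ∈ s
    · rw [dif_pos hu, dif_pos hv] at huv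
      exact hdisj i j hij _ _ huv
    · rw [dif_pos hu, dif_neg hv] at huv
      exact absurd (huv ▸ hmemused i ⟨u, hu⟩) (hmemc j ⟨v, hv⟩)
    · rw [dif_neg hu, dif_pos hv] at huv
      exact absurd (huv.symm ▸ hmemused j ⟨v, hv⟩) (hmemc i ⟨u, hu⟩)
    · rw [dif_neg hu, dif_neg hv] at huv
      exact hij (congrArg Prod.fst (g.injective (Subtype.ext huv)))

/-- Let `H'` be the graph obtained from `H` by removing all isolated vertices
(the induced subgraph on the set of non-isolated vertices), assumed nonempty.
If `x` (resp. `x'`) is the number of vertices covered by a maximum `H`-tiling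
(resp. `H'`-tiling) of an `n`-vertex graph `G`, then
`x = min{ |V(H)|·⌊n/|V(H)|⌋, x'·|V(H)|/|V(H')| }`. -/
theorem max_tiling_isolated_vertices {VH : Type*} [Fintype VH] (H : SimpleGraph VH)
    (hW : {v : VH | ∃ u, H.Adj v u}.Nonempty)
    {n : ℕ} (G : SimpleGraph (Fin n)) (x x' : ℕ)
    (hx : IsGreatest {m : ℕ | ∃ k : ℕ, HasTiling H G k ∧ m = k * Fintype.card VH} x)
    (hx' : IsGreatest {m : ℕ | ∃ k : ℕ,
        HasTiling (SimpleGraph.induce {v : VH | ∃ u, H.Adj v u} H) G k ∧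
        m = k * {v : VH | ∃ u, H.Adj v u}.ncard} x') :
    (x : ℝ) = min ((Fintype.card VH : ℝ) * ((n / Fintype.card VH : ℕ) : ℝ))
      ((x' : ℝ) * (Fintype.card VH : ℝ) / ({v : VH | ∃ u, H.Adj v u}.ncard : ℝ)) := by
  classical
  set W : Set VH := {v : VH | ∃ u, H.Adj v u} with hWdef
  set h : ℕ := Fintype.card VH with hhdef
  have hWcard : W.ncard = Fintype.card W := by
    rw [← Nat.card_coe_set_eq, Nat.card_eq_fintype_card]
  have hW'pos : 0 < Fintype.card W := Fintype.card_pos_iff.2 hW.to_subtype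
  have hhpos : 0 < h := Fintype.card_pos_iff.2 ⟨hW.some⟩
  have hedge : ∀ u v, H.Adj u v → u ∈ W := fun u v huv => ⟨v, huv⟩
  obtain ⟨k, hk, hxk⟩ := hx.1
  obtain ⟨k', hk', hxk'⟩ := hx'.1
  set m : ℕ := min (n / h) k' with hmdef
  -- k ≤ n / h
  have hkle : k ≤ n / h := by
    have := tiling_card_le hk
    rw [Fintype.card_fin] at this
    exact Nat.le_div_iff_mul_le hhpos |>.2 this
  -- k ≤ k'
  have hkk' : k ≤ k' := by
    have hmem : k * W.ncard ∈ {m : ℕ | ∃ k : ℕ,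
        HasTiling (SimpleGraph.induce W H) G k ∧ m = k * W.ncard} :=
      ⟨k, tiling_induce W hk, rfl⟩
    have := hx'.2 hmem
    rw [hxk'] at this
    have hW'pos' : 0 < W.ncard := hWcard ▸ hW'pos
    exact Nat.le_of_mul_le_mul_right this hW'pos'
  -- m * h ≤ x
  have hmh_le_n : m * h ≤ n := le_trans (Nat.mul_le_mul_right h (min_le_left _ _))
    (Nat.div_mul_le_self n h)
  have hmx : m * h ≤ x := by
    have h1 : HasTiling (SimpleGraph.induce W H) G m := tiling_mono (min_le_right _ _) hk'
    have h2 : HasTiling H G m := tiling_extend hedge h1 (by rwa [Fintype.card_fin])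
    exact hx.2 ⟨m, h2, rfl⟩
  have hxm : x = m * h := by
    have : x ≤ m * h := hxk ▸ Nat.mul_le_mul_right h (le_min hkle hkk')
    omega
  -- real computation
  have hW'ne : (W.ncard : ℝ) ≠ 0 := by
    have : 0 < W.ncard := hWcard ▸ hW'pos
    positivity
  have hright : (x' : ℝ) * (h : ℝ) / (W.ncard : ℝ) = ((k' * h : ℕ) : ℝ) := by
    rw [hxk']
    push_cast
    field_simp
  rw [hright, hxm]
  have hleft : (h : ℝ) * ((n / h : ℕ) : ℝ) = (((n / h) * h : ℕ) : ℝ) := by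
    push_cast; ring
  rw [hleft, ← Nat.cast_min]
  congr 1
  rw [hmdef]
  cases Nat.le_total (n / h) k' with
  | inl hle => rw [min_eq_left hle, min_eq_left (Nat.mul_le_mul_right h hle)]
  | inr hle => rw [min_eq_right hle, min_eq_right (Nat.mul_le_mul_right h hle)]
end
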